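/- Formula for the n-th prime via lcm: for every positive integer n, p_n = 1 + Σ_{k=1}^{⌊2 n log n + 2⌋} ( 1 - ⌊ (1/n) Σ_{j=2}^{k} ⌊ lcm(1,...,j) / ( j · lcm(1,...,j-1) ) ⌋ ⌋ ), where p_n is the n-th prime, lcm(1,...,m) is the least common multiple of 1,2,...,m, the inner and middle floor brackets denote integer (floor) division of natural numbers, the outer bound ⌊2 n log n + 2⌋ is the floor of the real number 2 n log n + 2, and log is the natural logarithm. -/

import Mathlib

/-- `L m` is the least common multiple of `1, 2, ..., m`
(the lcm of the empty range is `1`). -/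
def L (m : ℕ) : ℕ := (Finset.Icc 1 m).lcm id



lemma L_ne_zero (m : ℕ) : L m ≠ 0 := by
  unfold L
  rw [Ne, Finset.lcm_eq_zero_iff]
  intro h
  simp only [Set.mem_image, Finset.mem_coe, Finset.mem_Icc, id] at h
  obtain ⟨x, ⟨h1, _⟩, h0⟩ := h
  omega

lemma L_pos (m : ℕ) : 0 < L m := Nat.pos_of_ne_zero (L_ne_zero m)

lemma L_succ (m : ℕ) : L (m + 1) = Nat.lcm (m + 1) (L m) := by
  unfold L
  rw [show Finset.Icc 1 (m+1) = insert (m+1) (Finset.Icc 1 m) by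
    ext x; simp [Finset.mem_Icc, Finset.mem_insert]; omega]
  rw [Finset.lcm_insert]
  rfl

lemma dvd_L {j m : ℕ} (h1 : 1 ≤ j) (h2 : j ≤ m) : j ∣ L m :=
  Finset.dvd_lcm (by simp only [Finset.mem_Icc]; omega)

lemma L_dvd_factorial (m : ℕ) : L m ∣ m.factorial := by
  apply Finset.lcm_dvd
  intro j hj
  simp only [Finset.mem_Icc] at hj
  show j ∣ m.factorial
  exact Nat.dvd_factorial (by omega) hj.2

lemma L_prime {p : ℕ} (hp : p.Prime) : L p = p * L (p - 1) := by
  obtain ⟨q, rfl⟩ : ∃ q, p = q + 1 := ⟨p - 1, (Nat.succ_pred_eq_of_pos hp.pos).symm⟩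
  simp only [Nat.add_sub_cancel]
  rw [L_succ]
  have hnd : ¬ (q + 1) ∣ L q := by
    intro h
    have h2 : (q + 1) ∣ q.factorial := h.trans (L_dvd_factorial q)
    have := (Nat.Prime.dvd_factorial hp).mp h2
    omega
  have hco : Nat.Coprime (q + 1) (L q) := (Nat.Prime.coprime_iff_not_dvd hp).mpr hnd
  exact Nat.Coprime.lcm_eq_mul hco

lemma L_not_prime {j : ℕ} (h2 : 2 ≤ j) (hnp : ¬ j.Prime) : L j < j * L (j - 1) := by
  obtain ⟨q, rfl⟩ : ∃ q, j = q + 1 := ⟨j - 1, by omega⟩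
  simp only [Nat.add_sub_cancel]
  rw [L_succ]
  -- find a proper prime factor
  obtain ⟨p, pp, pdvd⟩ := Nat.exists_prime_and_dvd (by omega : q + 1 ≠ 1)
  have hpne : p ≠ q + 1 := fun h => hnp (h ▸ pp)
  have hple : p ≤ q := by
    have := Nat.le_of_dvd (by omega) pdvd
    omega
  have hpL : p ∣ L q := dvd_L pp.one_lt.le hple
  have hgcd : 2 ≤ Nat.gcd (q + 1) (L q) := by
    have hd : p ∣ Nat.gcd (q + 1) (L q) := Nat.dvd_gcd pdvd hpL
    exact le_trans pp.two_le (Nat.le_of_dvd (Nat.gcd_pos_of_pos_right _ (L_pos q)) hd)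
  have hid : Nat.lcm (q + 1) (L q) * Nat.gcd (q + 1) (L q) = (q + 1) * L q := by
    rw [mul_comm]; exact Nat.gcd_mul_lcm _ _
  have hlpos : 0 < Nat.lcm (q + 1) (L q) := Nat.pos_of_ne_zero (Nat.lcm_ne_zero (by omega) (L_ne_zero q))
  nlinarith [hlpos, hgcd, hid]


lemma L_quot {j : ℕ} (h2 : 2 ≤ j) : L j / (j * L (j - 1)) = if j.Prime then 1 else 0 := by
  split_ifs with hp
  · rw [L_prime hp, Nat.div_self]
    exact Nat.mul_pos (by omega) (L_pos _)
  · exact Nat.div_eq_of_lt (L_not_prime h2 hp)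

lemma innerSumEq (k : ℕ) :
    ∑ j ∈ Finset.Icc 2 k, L j / (j * L (j - 1)) = Nat.count Nat.Prime (k + 1) := by
  rw [Nat.count_eq_card_filter_range]
  rw [Finset.sum_congr rfl (fun j hj => L_quot (Finset.mem_Icc.mp hj).1)]
  rw [Finset.sum_boole]
  norm_cast
  congr 1
  ext x
  simp only [Finset.mem_filter, Finset.mem_Icc, Finset.mem_range, Nat.lt_succ_iff]
  constructor
  · rintro ⟨⟨h1, h2⟩, h3⟩; exact ⟨h2, h3⟩
  · rintro ⟨h1, h2⟩; exact ⟨⟨h2.two_le, h1⟩, h2⟩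

lemma centralBinom_dvd_L (s : ℕ) (hs : 1 ≤ s) : Nat.centralBinom s ∣ L (2 * s) := by
  rw [← Nat.factorization_le_iff_dvd (Nat.centralBinom_ne_zero s) (L_ne_zero _)]
  intro p
  by_cases hp : p.Prime
  · have h1 : (Nat.centralBinom s).factorization p ≤ Nat.log p (2 * s) := by
      unfold Nat.centralBinom
      exact Nat.factorization_choose_le_log
    refine h1.trans ?_
    rw [← Nat.Prime.pow_dvd_iff_le_factorization hp (L_ne_zero _)]
    apply dvd_L
    · exact Nat.one_le_pow _ _ hp.pos
    · exact Nat.pow_log_le_self p (by omega)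
  · simp [Nat.factorization_eq_zero_of_not_prime _ hp]

lemma L_le_pow (m : ℕ) (hm : 1 ≤ m) : L m ≤ m ^ (Nat.count Nat.Prime (m + 1)) := by
  set S := Finset.filter Nat.Prime (Finset.range (m + 1)) with hS
  have hdvd : L m ∣ ∏ p ∈ S, p ^ Nat.log p m := by
    unfold L
    apply Finset.lcm_dvd
    intro j hj
    simp only [Finset.mem_Icc] at hj
    show j ∣ _
    have hj0 : j ≠ 0 := by omega
    calc j = j.factorization.prod (· ^ ·) := (Nat.factorization_prod_pow_eq_self hj0).symm
    _ = ∏ p ∈ j.factorization.support, p ^ j.factorization p := rfl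
    _ ∣ ∏ p ∈ j.factorization.support, p ^ Nat.log p m := by
        apply Finset.prod_dvd_prod_of_dvd
        intro p hp
        apply pow_dvd_pow
        have hpp : p.Prime := Nat.prime_of_mem_primeFactors hp
        have h1 : p ^ j.factorization p ≤ m := le_trans (Nat.ordProj_le p hj0) hj.2
        exact (Nat.le_log_iff_pow_le hpp.one_lt (by omega)).mpr h1
    _ ∣ ∏ p ∈ S, p ^ Nat.log p m := by
        apply Finset.prod_dvd_prod_of_subset
        intro p hp
        have hpp : p.Prime := Nat.prime_of_mem_primeFactors hp
        have : p ∣ j := Nat.dvd_of_mem_primeFactors hp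
        have : p ≤ m := le_trans (Nat.le_of_dvd (by omega) this) hj.2
        simp [hS, Finset.mem_filter, Finset.mem_range]
        exact ⟨by omega, hpp⟩
  have h2 : ∏ p ∈ S, p ^ Nat.log p m ≤ ∏ _p ∈ S, m := by
    apply Finset.prod_le_prod'
    intro p hp
    exact Nat.pow_log_le_self p (by omega)
  calc L m ≤ ∏ p ∈ S, p ^ Nat.log p m := Nat.le_of_dvd (Finset.prod_pos (fun p hp => by
        have hpp : p.Prime := (Finset.mem_filter.mp hp).2
        exact Nat.pow_pos hpp.pos)) hdvd
    _ ≤ ∏ _p ∈ S, m := h2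
    _ = m ^ S.card := Finset.prod_const m
    _ = m ^ (Nat.count Nat.Prime (m + 1)) := by rw [Nat.count_eq_card_filter_range]

lemma cheb_even (s : ℕ) (hs : 1 ≤ s) :
    2 ^ (2 * s) ≤ (2 * s) ^ (Nat.count Nat.Prime (2 * s + 1) + 1) := by
  have h1 : 4 ^ s ≤ 2 * s * Nat.centralBinom s :=
    Nat.four_pow_le_two_mul_self_mul_centralBinom s hs
  have h2 : Nat.centralBinom s ≤ L (2 * s) :=
    Nat.le_of_dvd (L_pos _) (centralBinom_dvd_L s hs)
  have h3 : L (2 * s) ≤ (2 * s) ^ (Nat.count Nat.Prime (2 * s + 1)) := L_le_pow _ (by omega)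
  calc 2 ^ (2 * s) = 4 ^ s := by rw [pow_mul]; norm_num
    _ ≤ 2 * s * Nat.centralBinom s := h1
    _ ≤ 2 * s * (2 * s) ^ (Nat.count Nat.Prime (2 * s + 1)) := by
        exact Nat.mul_le_mul_left _ (h2.trans h3)
    _ = (2 * s) ^ (Nat.count Nat.Prime (2 * s + 1) + 1) := by ring

lemma cheb_real (m : ℕ) (hm : 2 ≤ m) :
    ((m : ℝ) - 1) * Real.log 2 ≤ ((Nat.count Nat.Prime (m + 1) : ℝ) + 1) * Real.log m := by
  set s := m / 2 with hs
  have hs1 : 1 ≤ s := by omega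
  have hmm : 2 * s ≤ m := by omega
  have hmm2 : m - 1 ≤ 2 * s := by omega
  have h1 := cheb_even s hs1
  have h2 : ((2:ℝ)) ^ (2*s) ≤ ((2 * s : ℕ) : ℝ) ^ (Nat.count Nat.Prime (2 * s + 1) + 1) := by
    exact_mod_cast h1
  have h3 := Real.log_le_log (by positivity) h2
  rw [Real.log_pow, Real.log_pow] at h3
  have hcle : Nat.count Nat.Prime (2 * s + 1) ≤ Nat.count Nat.Prime (m + 1) :=
    Nat.count_monotone _ (by omega)
  have hlog1 : Real.log ((2 * s : ℕ) : ℝ) ≤ Real.log m := by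
    apply Real.log_le_log (by positivity)
    exact_mod_cast hmm
  have hlogpos : 0 ≤ Real.log ((2 * s : ℕ) : ℝ) := by
    apply Real.log_nonneg
    have : (1:ℕ) ≤ 2 * s := by omega
    exact_mod_cast this
  have hl2 : 0 < Real.log 2 := Real.log_pos (by norm_num)
  calc ((m : ℝ) - 1) * Real.log 2 ≤ ((2 * s : ℕ) : ℝ) * Real.log 2 := by
        apply mul_le_mul_of_nonneg_right _ hl2.le
        have : ((m : ℝ) - 1) ≤ ((m - 1 : ℕ) : ℝ) := by
          push_cast [Nat.cast_sub (by omega : 1 ≤ m)]; linarith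
        refine this.trans ?_
        exact_mod_cast hmm2
    _ ≤ ((Nat.count Nat.Prime (2*s + 1) : ℝ) + 1) * Real.log ((2*s : ℕ) : ℝ) := by
        have := h3
        push_cast at this ⊢
        linarith
    _ ≤ ((Nat.count Nat.Prime (m + 1) : ℝ) + 1) * Real.log m := by
        apply mul_le_mul
        · have : (Nat.count Nat.Prime (2*s + 1) : ℝ) ≤ (Nat.count Nat.Prime (m + 1) : ℝ) := by
            exact_mod_cast hcle
          linarith
        · exact hlog1
        · exact hlogpos
        · positivity

lemma log_three_le : Real.log 3 ≤ (3 * Real.log 2 + 1/8) / 2 := by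
  have h9 : Real.log 9 = 2 * Real.log 3 := by
    rw [show (9:ℝ) = 3^2 by norm_num, Real.log_pow]; push_cast; ring
  have h9' : Real.log 9 = 3 * Real.log 2 + Real.log (9/8) := by
    rw [show (9:ℝ) = 2^3 * (9/8) by norm_num, Real.log_mul (by positivity) (by norm_num),
      Real.log_pow]
    push_cast; ring
  have h98 : Real.log (9/8) ≤ 9/8 - 1 := Real.log_le_sub_one_of_pos (by norm_num)
  linarith

lemma log_13865 : Real.log 13.865 ≤ 2.6313 := by
  have hsq : 2 * Real.log 13.865 = Real.log 192.238225 := by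
    rw [show (192.238225:ℝ) = 13.865^2 by norm_num, Real.log_pow]; push_cast; ring
  have hdec : Real.log 192.238225 =
      6 * Real.log 2 + Real.log 3 + Real.log (192.238225/192) := by
    rw [show (192.238225:ℝ) = 2^6 * 3 * (192.238225/192) by norm_num]
    rw [Real.log_mul (by positivity) (by norm_num), Real.log_mul (by positivity) (by norm_num),
      Real.log_pow]
    push_cast; ring
  have hc : Real.log (192.238225/192) ≤ 192.238225/192 - 1 :=
    Real.log_le_sub_one_of_pos (by norm_num)
  have hl2 := Real.log_two_lt_d9
  have := log_three_le
  linarith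

lemma large_bound (n : ℕ) (hn : 1024 ≤ n) :
    n ≤ Nat.count Nat.Prime (⌊2 * (n : ℝ) * Real.log n + 2⌋₊ + 1) := by
  have hl2l := Real.log_two_lt_d9
  have hl2g := Real.log_two_gt_d9
  set t := Real.log n with htdef
  have hnR : (1024:ℝ) ≤ (n:ℝ) := by exact_mod_cast hn
  have ht : 6.931471803 ≤ t := by
    have h1 : Real.log 1024 ≤ t := Real.log_le_log (by norm_num) hnR
    have h2 : Real.log 1024 = 10 * Real.log 2 := by
      rw [show (1024:ℝ) = 2^10 by norm_num, Real.log_pow]; push_cast; ring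
    nlinarith
  set X := 2 * (n:ℝ) * t + 2 with hXdef
  have hX0 : 0 ≤ X := by nlinarith
  set N := ⌊X⌋₊ with hNdef
  have hX1 : (N:ℝ) ≤ X := Nat.floor_le hX0
  have hX2 : X - 1 < (N:ℝ) := by
    have := Nat.lt_floor_add_one X
    linarith
  have hN2 : 2 ≤ N := by
    have : (2:ℝ) ≤ X - 1 := by nlinarith
    have h3 : (2:ℝ) ≤ (N:ℝ) := by linarith
    exact_mod_cast h3
  have cheb := cheb_real N hN2
  set π := Nat.count Nat.Prime (N + 1) with hπ
  -- bound log N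
  have hNpos : (0:ℝ) < N := by positivity
  have hXn : X ≤ (n:ℝ) * (2 * t + 0.002) := by nlinarith
  have hu0 : (0:ℝ) < 2 * t + 0.002 := by linarith
  have hlogN : Real.log N ≤ t + 1.6313 + (2 * t + 0.002) / 13.865 := by
    have h1 : Real.log N ≤ Real.log ((n:ℝ) * (2 * t + 0.002)) :=
      Real.log_le_log hNpos (hX1.trans hXn)
    rw [Real.log_mul (by positivity) (by positivity)] at h1
    have h2 : Real.log (2 * t + 0.002) =
        Real.log 13.865 + Real.log ((2 * t + 0.002) / 13.865) := by
      rw [← Real.log_mul (by norm_num) (by positivity)]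
      congr 1
      field_simp
    have h3 : Real.log ((2 * t + 0.002) / 13.865) ≤ (2 * t + 0.002) / 13.865 - 1 :=
      Real.log_le_sub_one_of_pos (by positivity)
    have := log_13865
    linarith
  have hlogNpos : 0 < Real.log N := by
    apply Real.log_pos
    have : (2:ℝ) ≤ (N:ℝ) := by exact_mod_cast hN2
    linarith
  -- key inequality
  have key : ((n:ℝ) + 1) * Real.log N ≤ ((N:ℝ) - 1) * Real.log 2 := by
    have hNl : 2 * (n:ℝ) * t ≤ (N:ℝ) - 1 := by linarith
    have hlogNnn : 0 ≤ Real.log N := hlogNpos.le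
    have hstep : ((n:ℝ) + 1) * Real.log N ≤
        ((n:ℝ) + 1) * (t + 1.6313 + (2 * t + 0.002) / 13.865) := by
      apply mul_le_mul_of_nonneg_left hlogN (by positivity)
    have hfin : ((n:ℝ) + 1) * (t + 1.6313 + (2 * t + 0.002) / 13.865) ≤
        (2 * (n:ℝ) * t) * Real.log 2 := by
      have hn0 : (0:ℝ) ≤ (n:ℝ) := by positivity
      have ht0 : (0:ℝ) ≤ t := by linarith
      obtain ⟨z, hz⟩ : ∃ z, z = (n:ℝ) * t := ⟨_, rfl⟩
      have hq1 : 6.931471803 * (n:ℝ) ≤ z := by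
        rw [hz]; calc 6.931471803 * (n:ℝ) ≤ t * (n:ℝ) := mul_le_mul_of_nonneg_right ht hn0
          _ = (n:ℝ) * t := mul_comm _ _
      have hq2 : 1024 * t ≤ z := by
        rw [hz]; exact mul_le_mul_of_nonneg_right hnR ht0
      have hz0 : 0 ≤ z := by rw [hz]; positivity
      have hq3 : 1.3862943606 * z ≤ 2 * z * Real.log 2 := by
        calc 1.3862943606 * z = (2 * z) * 0.6931471803 := by ring
          _ ≤ (2 * z) * Real.log 2 := mul_le_mul_of_nonneg_left hl2g.le (by linarith)
          _ = 2 * z * Real.log 2 := by ring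
      have hgoal : ((n:ℝ) + 1) * (t + 1.6313 + (2 * t + 0.002) / 13.865) =
          (1 + 2/13.865) * z + (1.6313 + 0.002/13.865) * (n:ℝ)
            + (1 + 2/13.865) * t + (1.6313 + 0.002/13.865) := by
        rw [hz]; ring
      have hrhs : (2 * (n:ℝ) * t) * Real.log 2 = 2 * z * Real.log 2 := by rw [hz]; ring
      rw [hgoal, hrhs]
      linarith [hq1, hq2, hq3]
    calc ((n:ℝ) + 1) * Real.log N ≤ (2 * (n:ℝ) * t) * Real.log 2 := hstep.trans hfin
      _ ≤ ((N:ℝ) - 1) * Real.log 2 := by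
          apply mul_le_mul_of_nonneg_right hNl (by linarith)
  have hfinal : ((n:ℝ) + 1) * Real.log N ≤ ((π:ℝ) + 1) * Real.log N := key.trans cheb
  have : ((n:ℝ) + 1) ≤ ((π:ℝ) + 1) := le_of_mul_le_mul_right hfinal hlogNpos
  have : (n:ℝ) ≤ (π:ℝ) := by linarith
  exact_mod_cast this


lemma cnt_step {a c : ℕ} (q : ℕ) (hq : Nat.Prime q) (ha : a ≤ q)
    (h : c ≤ Nat.count Nat.Prime a) : c + 1 ≤ Nat.count Nat.Prime (q + 1) := by
  have h2 : c ≤ Nat.count Nat.Prime q := h.trans (Nat.count_monotone _ ha)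
  rw [Nat.count_succ]
  simp only [hq, if_true]
  omega


theorem cnt1 : 1 ≤ Nat.count Nat.Prime 3 := cnt_step (a := 2) 2 (by norm_num) (by norm_num) (Nat.zero_le _)
theorem cnt2 : 2 ≤ Nat.count Nat.Prime 4 := cnt_step 3 (by norm_num) (by norm_num) cnt1
theorem cnt3 : 3 ≤ Nat.count Nat.Prime 6 := cnt_step 5 (by norm_num) (by norm_num) cnt2
theorem cnt4 : 4 ≤ Nat.count Nat.Prime 8 := cnt_step 7 (by norm_num) (by norm_num) cnt3
theorem cnt5 : 5 ≤ Nat.count Nat.Prime 12 := cnt_step 11 (by norm_num) (by norm_num) cnt4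
theorem cnt6 : 6 ≤ Nat.count Nat.Prime 14 := cnt_step 13 (by norm_num) (by norm_num) cnt5
theorem cnt7 : 7 ≤ Nat.count Nat.Prime 18 := cnt_step 17 (by norm_num) (by norm_num) cnt6
theorem cnt8 : 8 ≤ Nat.count Nat.Prime 20 := cnt_step 19 (by norm_num) (by norm_num) cnt7
theorem cnt9 : 9 ≤ Nat.count Nat.Prime 24 := cnt_step 23 (by norm_num) (by norm_num) cnt8
theorem cnt10 : 10 ≤ Nat.count Nat.Prime 30 := cnt_step 29 (by norm_num) (by norm_num) cnt9
theorem cnt11 : 11 ≤ Nat.count Nat.Prime 32 := cnt_step 31 (by norm_num) (by norm_num) cnt10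
theorem cnt12 : 12 ≤ Nat.count Nat.Prime 38 := cnt_step 37 (by norm_num) (by norm_num) cnt11
theorem cnt13 : 13 ≤ Nat.count Nat.Prime 42 := cnt_step 41 (by norm_num) (by norm_num) cnt12
theorem cnt14 : 14 ≤ Nat.count Nat.Prime 44 := cnt_step 43 (by norm_num) (by norm_num) cnt13
theorem cnt15 : 15 ≤ Nat.count Nat.Prime 48 := cnt_step 47 (by norm_num) (by norm_num) cnt14
theorem cnt16 : 16 ≤ Nat.count Nat.Prime 54 := cnt_step 53 (by norm_num) (by norm_num) cnt15
theorem cnt17 : 17 ≤ Nat.count Nat.Prime 60 := cnt_step 59 (by norm_num) (by norm_num) cnt16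
theorem cnt18 : 18 ≤ Nat.count Nat.Prime 62 := cnt_step 61 (by norm_num) (by norm_num) cnt17
theorem cnt19 : 19 ≤ Nat.count Nat.Prime 68 := cnt_step 67 (by norm_num) (by norm_num) cnt18
theorem cnt20 : 20 ≤ Nat.count Nat.Prime 72 := cnt_step 71 (by norm_num) (by norm_num) cnt19
theorem cnt21 : 21 ≤ Nat.count Nat.Prime 74 := cnt_step 73 (by norm_num) (by norm_num) cnt20
theorem cnt22 : 22 ≤ Nat.count Nat.Prime 80 := cnt_step 79 (by norm_num) (by norm_num) cnt21
theorem cnt23 : 23 ≤ Nat.count Nat.Prime 84 := cnt_step 83 (by norm_num) (by norm_num) cnt22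
theorem cnt24 : 24 ≤ Nat.count Nat.Prime 90 := cnt_step 89 (by norm_num) (by norm_num) cnt23
theorem cnt25 : 25 ≤ Nat.count Nat.Prime 98 := cnt_step 97 (by norm_num) (by norm_num) cnt24
theorem cnt26 : 26 ≤ Nat.count Nat.Prime 102 := cnt_step 101 (by norm_num) (by norm_num) cnt25
theorem cnt27 : 27 ≤ Nat.count Nat.Prime 104 := cnt_step 103 (by norm_num) (by norm_num) cnt26
theorem cnt28 : 28 ≤ Nat.count Nat.Prime 108 := cnt_step 107 (by norm_num) (by norm_num) cnt27
theorem cnt29 : 29 ≤ Nat.count Nat.Prime 110 := cnt_step 109 (by norm_num) (by norm_num) cnt28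
theorem cnt30 : 30 ≤ Nat.count Nat.Prime 114 := cnt_step 113 (by norm_num) (by norm_num) cnt29
theorem cnt31 : 31 ≤ Nat.count Nat.Prime 128 := cnt_step 127 (by norm_num) (by norm_num) cnt30
theorem cnt32 : 32 ≤ Nat.count Nat.Prime 132 := cnt_step 131 (by norm_num) (by norm_num) cnt31
theorem cnt33 : 33 ≤ Nat.count Nat.Prime 138 := cnt_step 137 (by norm_num) (by norm_num) cnt32
theorem cnt34 : 34 ≤ Nat.count Nat.Prime 140 := cnt_step 139 (by norm_num) (by norm_num) cnt33
theorem cnt35 : 35 ≤ Nat.count Nat.Prime 150 := cnt_step 149 (by norm_num) (by norm_num) cnt34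
theorem cnt36 : 36 ≤ Nat.count Nat.Prime 152 := cnt_step 151 (by norm_num) (by norm_num) cnt35
theorem cnt37 : 37 ≤ Nat.count Nat.Prime 158 := cnt_step 157 (by norm_num) (by norm_num) cnt36
theorem cnt38 : 38 ≤ Nat.count Nat.Prime 164 := cnt_step 163 (by norm_num) (by norm_num) cnt37
theorem cnt39 : 39 ≤ Nat.count Nat.Prime 168 := cnt_step 167 (by norm_num) (by norm_num) cnt38
theorem cnt40 : 40 ≤ Nat.count Nat.Prime 174 := cnt_step 173 (by norm_num) (by norm_num) cnt39
theorem cnt41 : 41 ≤ Nat.count Nat.Prime 180 := cnt_step 179 (by norm_num) (by norm_num) cnt40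
theorem cnt42 : 42 ≤ Nat.count Nat.Prime 182 := cnt_step 181 (by norm_num) (by norm_num) cnt41
theorem cnt43 : 43 ≤ Nat.count Nat.Prime 192 := cnt_step 191 (by norm_num) (by norm_num) cnt42
theorem cnt44 : 44 ≤ Nat.count Nat.Prime 194 := cnt_step 193 (by norm_num) (by norm_num) cnt43
theorem cnt45 : 45 ≤ Nat.count Nat.Prime 198 := cnt_step 197 (by norm_num) (by norm_num) cnt44
theorem cnt46 : 46 ≤ Nat.count Nat.Prime 200 := cnt_step 199 (by norm_num) (by norm_num) cnt45
theorem cnt47 : 47 ≤ Nat.count Nat.Prime 212 := cnt_step 211 (by norm_num) (by norm_num) cnt46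
theorem cnt48 : 48 ≤ Nat.count Nat.Prime 224 := cnt_step 223 (by norm_num) (by norm_num) cnt47
theorem cnt49 : 49 ≤ Nat.count Nat.Prime 228 := cnt_step 227 (by norm_num) (by norm_num) cnt48
theorem cnt50 : 50 ≤ Nat.count Nat.Prime 230 := cnt_step 229 (by norm_num) (by norm_num) cnt49
theorem cnt51 : 51 ≤ Nat.count Nat.Prime 234 := cnt_step 233 (by norm_num) (by norm_num) cnt50
theorem cnt52 : 52 ≤ Nat.count Nat.Prime 240 := cnt_step 239 (by norm_num) (by norm_num) cnt51
theorem cnt53 : 53 ≤ Nat.count Nat.Prime 242 := cnt_step 241 (by norm_num) (by norm_num) cnt52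
theorem cnt54 : 54 ≤ Nat.count Nat.Prime 252 := cnt_step 251 (by norm_num) (by norm_num) cnt53
theorem cnt55 : 55 ≤ Nat.count Nat.Prime 258 := cnt_step 257 (by norm_num) (by norm_num) cnt54
theorem cnt56 : 56 ≤ Nat.count Nat.Prime 264 := cnt_step 263 (by norm_num) (by norm_num) cnt55
theorem cnt57 : 57 ≤ Nat.count Nat.Prime 270 := cnt_step 269 (by norm_num) (by norm_num) cnt56
theorem cnt58 : 58 ≤ Nat.count Nat.Prime 272 := cnt_step 271 (by norm_num) (by norm_num) cnt57
theorem cnt59 : 59 ≤ Nat.count Nat.Prime 278 := cnt_step 277 (by norm_num) (by norm_num) cnt58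
theorem cnt60 : 60 ≤ Nat.count Nat.Prime 282 := cnt_step 281 (by norm_num) (by norm_num) cnt59
theorem cnt61 : 61 ≤ Nat.count Nat.Prime 284 := cnt_step 283 (by norm_num) (by norm_num) cnt60
theorem cnt62 : 62 ≤ Nat.count Nat.Prime 294 := cnt_step 293 (by norm_num) (by norm_num) cnt61
theorem cnt63 : 63 ≤ Nat.count Nat.Prime 308 := cnt_step 307 (by norm_num) (by norm_num) cnt62
theorem cnt64 : 64 ≤ Nat.count Nat.Prime 312 := cnt_step 311 (by norm_num) (by norm_num) cnt63
theorem cnt65 : 65 ≤ Nat.count Nat.Prime 314 := cnt_step 313 (by norm_num) (by norm_num) cnt64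
theorem cnt66 : 66 ≤ Nat.count Nat.Prime 318 := cnt_step 317 (by norm_num) (by norm_num) cnt65
theorem cnt67 : 67 ≤ Nat.count Nat.Prime 332 := cnt_step 331 (by norm_num) (by norm_num) cnt66
theorem cnt68 : 68 ≤ Nat.count Nat.Prime 338 := cnt_step 337 (by norm_num) (by norm_num) cnt67
theorem cnt69 : 69 ≤ Nat.count Nat.Prime 348 := cnt_step 347 (by norm_num) (by norm_num) cnt68
theorem cnt70 : 70 ≤ Nat.count Nat.Prime 350 := cnt_step 349 (by norm_num) (by norm_num) cnt69
theorem cnt71 : 71 ≤ Nat.count Nat.Prime 354 := cnt_step 353 (by norm_num) (by norm_num) cnt70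
theorem cnt72 : 72 ≤ Nat.count Nat.Prime 360 := cnt_step 359 (by norm_num) (by norm_num) cnt71
theorem cnt73 : 73 ≤ Nat.count Nat.Prime 368 := cnt_step 367 (by norm_num) (by norm_num) cnt72
theorem cnt74 : 74 ≤ Nat.count Nat.Prime 374 := cnt_step 373 (by norm_num) (by norm_num) cnt73
theorem cnt75 : 75 ≤ Nat.count Nat.Prime 380 := cnt_step 379 (by norm_num) (by norm_num) cnt74
theorem cnt76 : 76 ≤ Nat.count Nat.Prime 384 := cnt_step 383 (by norm_num) (by norm_num) cnt75
theorem cnt77 : 77 ≤ Nat.count Nat.Prime 390 := cnt_step 389 (by norm_num) (by norm_num) cnt76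
theorem cnt78 : 78 ≤ Nat.count Nat.Prime 398 := cnt_step 397 (by norm_num) (by norm_num) cnt77
theorem cnt79 : 79 ≤ Nat.count Nat.Prime 402 := cnt_step 401 (by norm_num) (by norm_num) cnt78
theorem cnt80 : 80 ≤ Nat.count Nat.Prime 410 := cnt_step 409 (by norm_num) (by norm_num) cnt79
theorem cnt81 : 81 ≤ Nat.count Nat.Prime 420 := cnt_step 419 (by norm_num) (by norm_num) cnt80
theorem cnt82 : 82 ≤ Nat.count Nat.Prime 422 := cnt_step 421 (by norm_num) (by norm_num) cnt81
theorem cnt83 : 83 ≤ Nat.count Nat.Prime 432 := cnt_step 431 (by norm_num) (by norm_num) cnt82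
theorem cnt84 : 84 ≤ Nat.count Nat.Prime 434 := cnt_step 433 (by norm_num) (by norm_num) cnt83
theorem cnt85 : 85 ≤ Nat.count Nat.Prime 440 := cnt_step 439 (by norm_num) (by norm_num) cnt84
theorem cnt86 : 86 ≤ Nat.count Nat.Prime 444 := cnt_step 443 (by norm_num) (by norm_num) cnt85
theorem cnt87 : 87 ≤ Nat.count Nat.Prime 450 := cnt_step 449 (by norm_num) (by norm_num) cnt86
theorem cnt88 : 88 ≤ Nat.count Nat.Prime 458 := cnt_step 457 (by norm_num) (by norm_num) cnt87
theorem cnt89 : 89 ≤ Nat.count Nat.Prime 462 := cnt_step 461 (by norm_num) (by norm_num) cnt88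
theorem cnt90 : 90 ≤ Nat.count Nat.Prime 464 := cnt_step 463 (by norm_num) (by norm_num) cnt89
theorem cnt91 : 91 ≤ Nat.count Nat.Prime 468 := cnt_step 467 (by norm_num) (by norm_num) cnt90
theorem cnt92 : 92 ≤ Nat.count Nat.Prime 480 := cnt_step 479 (by norm_num) (by norm_num) cnt91
theorem cnt93 : 93 ≤ Nat.count Nat.Prime 488 := cnt_step 487 (by norm_num) (by norm_num) cnt92
theorem cnt94 : 94 ≤ Nat.count Nat.Prime 492 := cnt_step 491 (by norm_num) (by norm_num) cnt93
theorem cnt95 : 95 ≤ Nat.count Nat.Prime 500 := cnt_step 499 (by norm_num) (by norm_num) cnt94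
theorem cnt96 : 96 ≤ Nat.count Nat.Prime 504 := cnt_step 503 (by norm_num) (by norm_num) cnt95
theorem cnt97 : 97 ≤ Nat.count Nat.Prime 510 := cnt_step 509 (by norm_num) (by norm_num) cnt96
theorem cnt98 : 98 ≤ Nat.count Nat.Prime 522 := cnt_step 521 (by norm_num) (by norm_num) cnt97
theorem cnt99 : 99 ≤ Nat.count Nat.Prime 524 := cnt_step 523 (by norm_num) (by norm_num) cnt98
theorem cnt100 : 100 ≤ Nat.count Nat.Prime 542 := cnt_step 541 (by norm_num) (by norm_num) cnt99
theorem cnt101 : 101 ≤ Nat.count Nat.Prime 548 := cnt_step 547 (by norm_num) (by norm_num) cnt100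
theorem cnt102 : 102 ≤ Nat.count Nat.Prime 558 := cnt_step 557 (by norm_num) (by norm_num) cnt101
theorem cnt103 : 103 ≤ Nat.count Nat.Prime 564 := cnt_step 563 (by norm_num) (by norm_num) cnt102
theorem cnt104 : 104 ≤ Nat.count Nat.Prime 570 := cnt_step 569 (by norm_num) (by norm_num) cnt103
theorem cnt105 : 105 ≤ Nat.count Nat.Prime 572 := cnt_step 571 (by norm_num) (by norm_num) cnt104
theorem cnt106 : 106 ≤ Nat.count Nat.Prime 578 := cnt_step 577 (by norm_num) (by norm_num) cnt105
theorem cnt107 : 107 ≤ Nat.count Nat.Prime 588 := cnt_step 587 (by norm_num) (by norm_num) cnt106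
theorem cnt108 : 108 ≤ Nat.count Nat.Prime 594 := cnt_step 593 (by norm_num) (by norm_num) cnt107
theorem cnt109 : 109 ≤ Nat.count Nat.Prime 600 := cnt_step 599 (by norm_num) (by norm_num) cnt108
theorem cnt110 : 110 ≤ Nat.count Nat.Prime 602 := cnt_step 601 (by norm_num) (by norm_num) cnt109
theorem cnt111 : 111 ≤ Nat.count Nat.Prime 608 := cnt_step 607 (by norm_num) (by norm_num) cnt110
theorem cnt112 : 112 ≤ Nat.count Nat.Prime 614 := cnt_step 613 (by norm_num) (by norm_num) cnt111
theorem cnt113 : 113 ≤ Nat.count Nat.Prime 618 := cnt_step 617 (by norm_num) (by norm_num) cnt112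
theorem cnt114 : 114 ≤ Nat.count Nat.Prime 620 := cnt_step 619 (by norm_num) (by norm_num) cnt113
theorem cnt115 : 115 ≤ Nat.count Nat.Prime 632 := cnt_step 631 (by norm_num) (by norm_num) cnt114
theorem cnt116 : 116 ≤ Nat.count Nat.Prime 642 := cnt_step 641 (by norm_num) (by norm_num) cnt115
theorem cnt117 : 117 ≤ Nat.count Nat.Prime 644 := cnt_step 643 (by norm_num) (by norm_num) cnt116
theorem cnt118 : 118 ≤ Nat.count Nat.Prime 648 := cnt_step 647 (by norm_num) (by norm_num) cnt117
theorem cnt119 : 119 ≤ Nat.count Nat.Prime 654 := cnt_step 653 (by norm_num) (by norm_num) cnt118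
theorem cnt120 : 120 ≤ Nat.count Nat.Prime 660 := cnt_step 659 (by norm_num) (by norm_num) cnt119
theorem cnt121 : 121 ≤ Nat.count Nat.Prime 662 := cnt_step 661 (by norm_num) (by norm_num) cnt120
theorem cnt122 : 122 ≤ Nat.count Nat.Prime 674 := cnt_step 673 (by norm_num) (by norm_num) cnt121
theorem cnt123 : 123 ≤ Nat.count Nat.Prime 678 := cnt_step 677 (by norm_num) (by norm_num) cnt122
theorem cnt124 : 124 ≤ Nat.count Nat.Prime 684 := cnt_step 683 (by norm_num) (by norm_num) cnt123
theorem cnt125 : 125 ≤ Nat.count Nat.Prime 692 := cnt_step 691 (by norm_num) (by norm_num) cnt124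
theorem cnt126 : 126 ≤ Nat.count Nat.Prime 702 := cnt_step 701 (by norm_num) (by norm_num) cnt125
theorem cnt127 : 127 ≤ Nat.count Nat.Prime 710 := cnt_step 709 (by norm_num) (by norm_num) cnt126
theorem cnt128 : 128 ≤ Nat.count Nat.Prime 720 := cnt_step 719 (by norm_num) (by norm_num) cnt127
theorem cnt129 : 129 ≤ Nat.count Nat.Prime 728 := cnt_step 727 (by norm_num) (by norm_num) cnt128
theorem cnt130 : 130 ≤ Nat.count Nat.Prime 734 := cnt_step 733 (by norm_num) (by norm_num) cnt129
theorem cnt131 : 131 ≤ Nat.count Nat.Prime 740 := cnt_step 739 (by norm_num) (by norm_num) cnt130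
theorem cnt132 : 132 ≤ Nat.count Nat.Prime 744 := cnt_step 743 (by norm_num) (by norm_num) cnt131
theorem cnt133 : 133 ≤ Nat.count Nat.Prime 752 := cnt_step 751 (by norm_num) (by norm_num) cnt132
theorem cnt134 : 134 ≤ Nat.count Nat.Prime 758 := cnt_step 757 (by norm_num) (by norm_num) cnt133
theorem cnt135 : 135 ≤ Nat.count Nat.Prime 762 := cnt_step 761 (by norm_num) (by norm_num) cnt134
theorem cnt136 : 136 ≤ Nat.count Nat.Prime 770 := cnt_step 769 (by norm_num) (by norm_num) cnt135
theorem cnt137 : 137 ≤ Nat.count Nat.Prime 774 := cnt_step 773 (by norm_num) (by norm_num) cnt136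
theorem cnt138 : 138 ≤ Nat.count Nat.Prime 788 := cnt_step 787 (by norm_num) (by norm_num) cnt137
theorem cnt139 : 139 ≤ Nat.count Nat.Prime 798 := cnt_step 797 (by norm_num) (by norm_num) cnt138
theorem cnt140 : 140 ≤ Nat.count Nat.Prime 810 := cnt_step 809 (by norm_num) (by norm_num) cnt139
theorem cnt141 : 141 ≤ Nat.count Nat.Prime 812 := cnt_step 811 (by norm_num) (by norm_num) cnt140
theorem cnt142 : 142 ≤ Nat.count Nat.Prime 822 := cnt_step 821 (by norm_num) (by norm_num) cnt141
theorem cnt143 : 143 ≤ Nat.count Nat.Prime 824 := cnt_step 823 (by norm_num) (by norm_num) cnt142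
theorem cnt144 : 144 ≤ Nat.count Nat.Prime 828 := cnt_step 827 (by norm_num) (by norm_num) cnt143
theorem cnt145 : 145 ≤ Nat.count Nat.Prime 830 := cnt_step 829 (by norm_num) (by norm_num) cnt144
theorem cnt146 : 146 ≤ Nat.count Nat.Prime 840 := cnt_step 839 (by norm_num) (by norm_num) cnt145
theorem cnt147 : 147 ≤ Nat.count Nat.Prime 854 := cnt_step 853 (by norm_num) (by norm_num) cnt146
theorem cnt148 : 148 ≤ Nat.count Nat.Prime 858 := cnt_step 857 (by norm_num) (by norm_num) cnt147
theorem cnt149 : 149 ≤ Nat.count Nat.Prime 860 := cnt_step 859 (by norm_num) (by norm_num) cnt148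
theorem cnt150 : 150 ≤ Nat.count Nat.Prime 864 := cnt_step 863 (by norm_num) (by norm_num) cnt149
theorem cnt151 : 151 ≤ Nat.count Nat.Prime 878 := cnt_step 877 (by norm_num) (by norm_num) cnt150
theorem cnt152 : 152 ≤ Nat.count Nat.Prime 882 := cnt_step 881 (by norm_num) (by norm_num) cnt151
theorem cnt153 : 153 ≤ Nat.count Nat.Prime 884 := cnt_step 883 (by norm_num) (by norm_num) cnt152
theorem cnt154 : 154 ≤ Nat.count Nat.Prime 888 := cnt_step 887 (by norm_num) (by norm_num) cnt153
theorem cnt155 : 155 ≤ Nat.count Nat.Prime 908 := cnt_step 907 (by norm_num) (by norm_num) cnt154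
theorem cnt156 : 156 ≤ Nat.count Nat.Prime 912 := cnt_step 911 (by norm_num) (by norm_num) cnt155
theorem cnt157 : 157 ≤ Nat.count Nat.Prime 920 := cnt_step 919 (by norm_num) (by norm_num) cnt156
theorem cnt158 : 158 ≤ Nat.count Nat.Prime 930 := cnt_step 929 (by norm_num) (by norm_num) cnt157
theorem cnt159 : 159 ≤ Nat.count Nat.Prime 938 := cnt_step 937 (by norm_num) (by norm_num) cnt158
theorem cnt160 : 160 ≤ Nat.count Nat.Prime 942 := cnt_step 941 (by norm_num) (by norm_num) cnt159
theorem cnt161 : 161 ≤ Nat.count Nat.Prime 948 := cnt_step 947 (by norm_num) (by norm_num) cnt160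
theorem cnt162 : 162 ≤ Nat.count Nat.Prime 954 := cnt_step 953 (by norm_num) (by norm_num) cnt161
theorem cnt163 : 163 ≤ Nat.count Nat.Prime 968 := cnt_step 967 (by norm_num) (by norm_num) cnt162
theorem cnt164 : 164 ≤ Nat.count Nat.Prime 972 := cnt_step 971 (by norm_num) (by norm_num) cnt163
theorem cnt165 : 165 ≤ Nat.count Nat.Prime 978 := cnt_step 977 (by norm_num) (by norm_num) cnt164
theorem cnt166 : 166 ≤ Nat.count Nat.Prime 984 := cnt_step 983 (by norm_num) (by norm_num) cnt165
theorem cnt167 : 167 ≤ Nat.count Nat.Prime 992 := cnt_step 991 (by norm_num) (by norm_num) cnt166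
theorem cnt168 : 168 ≤ Nat.count Nat.Prime 998 := cnt_step 997 (by norm_num) (by norm_num) cnt167
theorem cnt169 : 169 ≤ Nat.count Nat.Prime 1010 := cnt_step 1009 (by norm_num) (by norm_num) cnt168
theorem cnt170 : 170 ≤ Nat.count Nat.Prime 1014 := cnt_step 1013 (by norm_num) (by norm_num) cnt169
theorem cnt171 : 171 ≤ Nat.count Nat.Prime 1020 := cnt_step 1019 (by norm_num) (by norm_num) cnt170
theorem cnt172 : 172 ≤ Nat.count Nat.Prime 1022 := cnt_step 1021 (by norm_num) (by norm_num) cnt171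
theorem cnt173 : 173 ≤ Nat.count Nat.Prime 1032 := cnt_step 1031 (by norm_num) (by norm_num) cnt172
theorem cnt174 : 174 ≤ Nat.count Nat.Prime 1034 := cnt_step 1033 (by norm_num) (by norm_num) cnt173
theorem cnt175 : 175 ≤ Nat.count Nat.Prime 1040 := cnt_step 1039 (by norm_num) (by norm_num) cnt174
theorem cnt176 : 176 ≤ Nat.count Nat.Prime 1050 := cnt_step 1049 (by norm_num) (by norm_num) cnt175
theorem cnt177 : 177 ≤ Nat.count Nat.Prime 1052 := cnt_step 1051 (by norm_num) (by norm_num) cnt176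
theorem cnt178 : 178 ≤ Nat.count Nat.Prime 1062 := cnt_step 1061 (by norm_num) (by norm_num) cnt177
theorem cnt179 : 179 ≤ Nat.count Nat.Prime 1064 := cnt_step 1063 (by norm_num) (by norm_num) cnt178
theorem cnt180 : 180 ≤ Nat.count Nat.Prime 1070 := cnt_step 1069 (by norm_num) (by norm_num) cnt179
theorem cnt181 : 181 ≤ Nat.count Nat.Prime 1088 := cnt_step 1087 (by norm_num) (by norm_num) cnt180
theorem cnt182 : 182 ≤ Nat.count Nat.Prime 1092 := cnt_step 1091 (by norm_num) (by norm_num) cnt181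
theorem cnt183 : 183 ≤ Nat.count Nat.Prime 1094 := cnt_step 1093 (by norm_num) (by norm_num) cnt182
theorem cnt184 : 184 ≤ Nat.count Nat.Prime 1098 := cnt_step 1097 (by norm_num) (by norm_num) cnt183
theorem cnt185 : 185 ≤ Nat.count Nat.Prime 1104 := cnt_step 1103 (by norm_num) (by norm_num) cnt184
theorem cnt186 : 186 ≤ Nat.count Nat.Prime 1110 := cnt_step 1109 (by norm_num) (by norm_num) cnt185
theorem cnt187 : 187 ≤ Nat.count Nat.Prime 1118 := cnt_step 1117 (by norm_num) (by norm_num) cnt186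
theorem cnt188 : 188 ≤ Nat.count Nat.Prime 1124 := cnt_step 1123 (by norm_num) (by norm_num) cnt187
theorem cnt189 : 189 ≤ Nat.count Nat.Prime 1130 := cnt_step 1129 (by norm_num) (by norm_num) cnt188
theorem cnt190 : 190 ≤ Nat.count Nat.Prime 1152 := cnt_step 1151 (by norm_num) (by norm_num) cnt189
theorem cnt191 : 191 ≤ Nat.count Nat.Prime 1154 := cnt_step 1153 (by norm_num) (by norm_num) cnt190
theorem cnt192 : 192 ≤ Nat.count Nat.Prime 1164 := cnt_step 1163 (by norm_num) (by norm_num) cnt191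
theorem cnt193 : 193 ≤ Nat.count Nat.Prime 1172 := cnt_step 1171 (by norm_num) (by norm_num) cnt192
theorem cnt194 : 194 ≤ Nat.count Nat.Prime 1182 := cnt_step 1181 (by norm_num) (by norm_num) cnt193
theorem cnt195 : 195 ≤ Nat.count Nat.Prime 1188 := cnt_step 1187 (by norm_num) (by norm_num) cnt194
theorem cnt196 : 196 ≤ Nat.count Nat.Prime 1194 := cnt_step 1193 (by norm_num) (by norm_num) cnt195
theorem cnt197 : 197 ≤ Nat.count Nat.Prime 1202 := cnt_step 1201 (by norm_num) (by norm_num) cnt196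
theorem cnt198 : 198 ≤ Nat.count Nat.Prime 1214 := cnt_step 1213 (by norm_num) (by norm_num) cnt197
theorem cnt199 : 199 ≤ Nat.count Nat.Prime 1218 := cnt_step 1217 (by norm_num) (by norm_num) cnt198
theorem cnt200 : 200 ≤ Nat.count Nat.Prime 1224 := cnt_step 1223 (by norm_num) (by norm_num) cnt199
theorem cnt201 : 201 ≤ Nat.count Nat.Prime 1230 := cnt_step 1229 (by norm_num) (by norm_num) cnt200
theorem cnt202 : 202 ≤ Nat.count Nat.Prime 1232 := cnt_step 1231 (by norm_num) (by norm_num) cnt201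
theorem cnt203 : 203 ≤ Nat.count Nat.Prime 1238 := cnt_step 1237 (by norm_num) (by norm_num) cnt202
theorem cnt204 : 204 ≤ Nat.count Nat.Prime 1250 := cnt_step 1249 (by norm_num) (by norm_num) cnt203
theorem cnt205 : 205 ≤ Nat.count Nat.Prime 1260 := cnt_step 1259 (by norm_num) (by norm_num) cnt204
theorem cnt206 : 206 ≤ Nat.count Nat.Prime 1278 := cnt_step 1277 (by norm_num) (by norm_num) cnt205
theorem cnt207 : 207 ≤ Nat.count Nat.Prime 1280 := cnt_step 1279 (by norm_num) (by norm_num) cnt206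
theorem cnt208 : 208 ≤ Nat.count Nat.Prime 1284 := cnt_step 1283 (by norm_num) (by norm_num) cnt207
theorem cnt209 : 209 ≤ Nat.count Nat.Prime 1290 := cnt_step 1289 (by norm_num) (by norm_num) cnt208
theorem cnt210 : 210 ≤ Nat.count Nat.Prime 1292 := cnt_step 1291 (by norm_num) (by norm_num) cnt209
theorem cnt211 : 211 ≤ Nat.count Nat.Prime 1298 := cnt_step 1297 (by norm_num) (by norm_num) cnt210
theorem cnt212 : 212 ≤ Nat.count Nat.Prime 1302 := cnt_step 1301 (by norm_num) (by norm_num) cnt211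
theorem cnt213 : 213 ≤ Nat.count Nat.Prime 1304 := cnt_step 1303 (by norm_num) (by norm_num) cnt212
theorem cnt214 : 214 ≤ Nat.count Nat.Prime 1308 := cnt_step 1307 (by norm_num) (by norm_num) cnt213
theorem cnt215 : 215 ≤ Nat.count Nat.Prime 1320 := cnt_step 1319 (by norm_num) (by norm_num) cnt214
theorem cnt216 : 216 ≤ Nat.count Nat.Prime 1322 := cnt_step 1321 (by norm_num) (by norm_num) cnt215
theorem cnt217 : 217 ≤ Nat.count Nat.Prime 1328 := cnt_step 1327 (by norm_num) (by norm_num) cnt216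
theorem cnt218 : 218 ≤ Nat.count Nat.Prime 1362 := cnt_step 1361 (by norm_num) (by norm_num) cnt217
theorem cnt219 : 219 ≤ Nat.count Nat.Prime 1368 := cnt_step 1367 (by norm_num) (by norm_num) cnt218
theorem cnt220 : 220 ≤ Nat.count Nat.Prime 1374 := cnt_step 1373 (by norm_num) (by norm_num) cnt219
theorem cnt221 : 221 ≤ Nat.count Nat.Prime 1382 := cnt_step 1381 (by norm_num) (by norm_num) cnt220
theorem cnt222 : 222 ≤ Nat.count Nat.Prime 1400 := cnt_step 1399 (by norm_num) (by norm_num) cnt221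
theorem cnt223 : 223 ≤ Nat.count Nat.Prime 1410 := cnt_step 1409 (by norm_num) (by norm_num) cnt222
theorem cnt224 : 224 ≤ Nat.count Nat.Prime 1424 := cnt_step 1423 (by norm_num) (by norm_num) cnt223
theorem cnt225 : 225 ≤ Nat.count Nat.Prime 1428 := cnt_step 1427 (by norm_num) (by norm_num) cnt224
theorem cnt226 : 226 ≤ Nat.count Nat.Prime 1430 := cnt_step 1429 (by norm_num) (by norm_num) cnt225
theorem cnt227 : 227 ≤ Nat.count Nat.Prime 1434 := cnt_step 1433 (by norm_num) (by norm_num) cnt226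
theorem cnt228 : 228 ≤ Nat.count Nat.Prime 1440 := cnt_step 1439 (by norm_num) (by norm_num) cnt227
theorem cnt229 : 229 ≤ Nat.count Nat.Prime 1448 := cnt_step 1447 (by norm_num) (by norm_num) cnt228
theorem cnt230 : 230 ≤ Nat.count Nat.Prime 1452 := cnt_step 1451 (by norm_num) (by norm_num) cnt229
theorem cnt231 : 231 ≤ Nat.count Nat.Prime 1454 := cnt_step 1453 (by norm_num) (by norm_num) cnt230
theorem cnt232 : 232 ≤ Nat.count Nat.Prime 1460 := cnt_step 1459 (by norm_num) (by norm_num) cnt231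
theorem cnt233 : 233 ≤ Nat.count Nat.Prime 1472 := cnt_step 1471 (by norm_num) (by norm_num) cnt232
theorem cnt234 : 234 ≤ Nat.count Nat.Prime 1482 := cnt_step 1481 (by norm_num) (by norm_num) cnt233
theorem cnt235 : 235 ≤ Nat.count Nat.Prime 1484 := cnt_step 1483 (by norm_num) (by norm_num) cnt234
theorem cnt236 : 236 ≤ Nat.count Nat.Prime 1488 := cnt_step 1487 (by norm_num) (by norm_num) cnt235
theorem cnt237 : 237 ≤ Nat.count Nat.Prime 1490 := cnt_step 1489 (by norm_num) (by norm_num) cnt236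
theorem cnt238 : 238 ≤ Nat.count Nat.Prime 1494 := cnt_step 1493 (by norm_num) (by norm_num) cnt237
theorem cnt239 : 239 ≤ Nat.count Nat.Prime 1500 := cnt_step 1499 (by norm_num) (by norm_num) cnt238
theorem cnt240 : 240 ≤ Nat.count Nat.Prime 1512 := cnt_step 1511 (by norm_num) (by norm_num) cnt239
theorem cnt241 : 241 ≤ Nat.count Nat.Prime 1524 := cnt_step 1523 (by norm_num) (by norm_num) cnt240
theorem cnt242 : 242 ≤ Nat.count Nat.Prime 1532 := cnt_step 1531 (by norm_num) (by norm_num) cnt241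
theorem cnt243 : 243 ≤ Nat.count Nat.Prime 1544 := cnt_step 1543 (by norm_num) (by norm_num) cnt242
theorem cnt244 : 244 ≤ Nat.count Nat.Prime 1550 := cnt_step 1549 (by norm_num) (by norm_num) cnt243
theorem cnt245 : 245 ≤ Nat.count Nat.Prime 1554 := cnt_step 1553 (by norm_num) (by norm_num) cnt244
theorem cnt246 : 246 ≤ Nat.count Nat.Prime 1560 := cnt_step 1559 (by norm_num) (by norm_num) cnt245
theorem cnt247 : 247 ≤ Nat.count Nat.Prime 1568 := cnt_step 1567 (by norm_num) (by norm_num) cnt246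
theorem cnt248 : 248 ≤ Nat.count Nat.Prime 1572 := cnt_step 1571 (by norm_num) (by norm_num) cnt247
theorem cnt249 : 249 ≤ Nat.count Nat.Prime 1580 := cnt_step 1579 (by norm_num) (by norm_num) cnt248
theorem cnt250 : 250 ≤ Nat.count Nat.Prime 1584 := cnt_step 1583 (by norm_num) (by norm_num) cnt249
theorem cnt251 : 251 ≤ Nat.count Nat.Prime 1598 := cnt_step 1597 (by norm_num) (by norm_num) cnt250
theorem cnt252 : 252 ≤ Nat.count Nat.Prime 1602 := cnt_step 1601 (by norm_num) (by norm_num) cnt251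
theorem cnt253 : 253 ≤ Nat.count Nat.Prime 1608 := cnt_step 1607 (by norm_num) (by norm_num) cnt252
theorem cnt254 : 254 ≤ Nat.count Nat.Prime 1610 := cnt_step 1609 (by norm_num) (by norm_num) cnt253
theorem cnt255 : 255 ≤ Nat.count Nat.Prime 1614 := cnt_step 1613 (by norm_num) (by norm_num) cnt254
theorem cnt256 : 256 ≤ Nat.count Nat.Prime 1620 := cnt_step 1619 (by norm_num) (by norm_num) cnt255
theorem cnt257 : 257 ≤ Nat.count Nat.Prime 1622 := cnt_step 1621 (by norm_num) (by norm_num) cnt256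
theorem cnt258 : 258 ≤ Nat.count Nat.Prime 1628 := cnt_step 1627 (by norm_num) (by norm_num) cnt257
theorem cnt259 : 259 ≤ Nat.count Nat.Prime 1638 := cnt_step 1637 (by norm_num) (by norm_num) cnt258
theorem cnt260 : 260 ≤ Nat.count Nat.Prime 1658 := cnt_step 1657 (by norm_num) (by norm_num) cnt259
theorem cnt261 : 261 ≤ Nat.count Nat.Prime 1664 := cnt_step 1663 (by norm_num) (by norm_num) cnt260
theorem cnt262 : 262 ≤ Nat.count Nat.Prime 1668 := cnt_step 1667 (by norm_num) (by norm_num) cnt261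
theorem cnt263 : 263 ≤ Nat.count Nat.Prime 1670 := cnt_step 1669 (by norm_num) (by norm_num) cnt262
theorem cnt264 : 264 ≤ Nat.count Nat.Prime 1694 := cnt_step 1693 (by norm_num) (by norm_num) cnt263
theorem cnt265 : 265 ≤ Nat.count Nat.Prime 1698 := cnt_step 1697 (by norm_num) (by norm_num) cnt264
theorem cnt266 : 266 ≤ Nat.count Nat.Prime 1700 := cnt_step 1699 (by norm_num) (by norm_num) cnt265
theorem cnt267 : 267 ≤ Nat.count Nat.Prime 1710 := cnt_step 1709 (by norm_num) (by norm_num) cnt266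
theorem cnt268 : 268 ≤ Nat.count Nat.Prime 1722 := cnt_step 1721 (by norm_num) (by norm_num) cnt267
theorem cnt269 : 269 ≤ Nat.count Nat.Prime 1724 := cnt_step 1723 (by norm_num) (by norm_num) cnt268
theorem cnt270 : 270 ≤ Nat.count Nat.Prime 1734 := cnt_step 1733 (by norm_num) (by norm_num) cnt269
theorem cnt271 : 271 ≤ Nat.count Nat.Prime 1742 := cnt_step 1741 (by norm_num) (by norm_num) cnt270
theorem cnt272 : 272 ≤ Nat.count Nat.Prime 1748 := cnt_step 1747 (by norm_num) (by norm_num) cnt271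
theorem cnt273 : 273 ≤ Nat.count Nat.Prime 1754 := cnt_step 1753 (by norm_num) (by norm_num) cnt272
theorem cnt274 : 274 ≤ Nat.count Nat.Prime 1760 := cnt_step 1759 (by norm_num) (by norm_num) cnt273
theorem cnt275 : 275 ≤ Nat.count Nat.Prime 1778 := cnt_step 1777 (by norm_num) (by norm_num) cnt274
theorem cnt276 : 276 ≤ Nat.count Nat.Prime 1784 := cnt_step 1783 (by norm_num) (by norm_num) cnt275
theorem cnt277 : 277 ≤ Nat.count Nat.Prime 1788 := cnt_step 1787 (by norm_num) (by norm_num) cnt276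
theorem cnt278 : 278 ≤ Nat.count Nat.Prime 1790 := cnt_step 1789 (by norm_num) (by norm_num) cnt277
theorem cnt279 : 279 ≤ Nat.count Nat.Prime 1802 := cnt_step 1801 (by norm_num) (by norm_num) cnt278
theorem cnt280 : 280 ≤ Nat.count Nat.Prime 1812 := cnt_step 1811 (by norm_num) (by norm_num) cnt279
theorem cnt281 : 281 ≤ Nat.count Nat.Prime 1824 := cnt_step 1823 (by norm_num) (by norm_num) cnt280
theorem cnt282 : 282 ≤ Nat.count Nat.Prime 1832 := cnt_step 1831 (by norm_num) (by norm_num) cnt281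
theorem cnt283 : 283 ≤ Nat.count Nat.Prime 1848 := cnt_step 1847 (by norm_num) (by norm_num) cnt282
theorem cnt284 : 284 ≤ Nat.count Nat.Prime 1862 := cnt_step 1861 (by norm_num) (by norm_num) cnt283
theorem cnt285 : 285 ≤ Nat.count Nat.Prime 1868 := cnt_step 1867 (by norm_num) (by norm_num) cnt284
theorem cnt286 : 286 ≤ Nat.count Nat.Prime 1872 := cnt_step 1871 (by norm_num) (by norm_num) cnt285
theorem cnt287 : 287 ≤ Nat.count Nat.Prime 1874 := cnt_step 1873 (by norm_num) (by norm_num) cnt286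
theorem cnt288 : 288 ≤ Nat.count Nat.Prime 1878 := cnt_step 1877 (by norm_num) (by norm_num) cnt287
theorem cnt289 : 289 ≤ Nat.count Nat.Prime 1880 := cnt_step 1879 (by norm_num) (by norm_num) cnt288
theorem cnt290 : 290 ≤ Nat.count Nat.Prime 1890 := cnt_step 1889 (by norm_num) (by norm_num) cnt289
theorem cnt291 : 291 ≤ Nat.count Nat.Prime 1902 := cnt_step 1901 (by norm_num) (by norm_num) cnt290
theorem cnt292 : 292 ≤ Nat.count Nat.Prime 1908 := cnt_step 1907 (by norm_num) (by norm_num) cnt291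
theorem cnt293 : 293 ≤ Nat.count Nat.Prime 1914 := cnt_step 1913 (by norm_num) (by norm_num) cnt292
theorem cnt294 : 294 ≤ Nat.count Nat.Prime 1932 := cnt_step 1931 (by norm_num) (by norm_num) cnt293
theorem cnt295 : 295 ≤ Nat.count Nat.Prime 1934 := cnt_step 1933 (by norm_num) (by norm_num) cnt294
theorem cnt296 : 296 ≤ Nat.count Nat.Prime 1950 := cnt_step 1949 (by norm_num) (by norm_num) cnt295
theorem cnt297 : 297 ≤ Nat.count Nat.Prime 1952 := cnt_step 1951 (by norm_num) (by norm_num) cnt296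
theorem cnt298 : 298 ≤ Nat.count Nat.Prime 1974 := cnt_step 1973 (by norm_num) (by norm_num) cnt297
theorem cnt299 : 299 ≤ Nat.count Nat.Prime 1980 := cnt_step 1979 (by norm_num) (by norm_num) cnt298
theorem cnt300 : 300 ≤ Nat.count Nat.Prime 1988 := cnt_step 1987 (by norm_num) (by norm_num) cnt299
theorem cnt301 : 301 ≤ Nat.count Nat.Prime 1994 := cnt_step 1993 (by norm_num) (by norm_num) cnt300
theorem cnt302 : 302 ≤ Nat.count Nat.Prime 1998 := cnt_step 1997 (by norm_num) (by norm_num) cnt301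
theorem cnt303 : 303 ≤ Nat.count Nat.Prime 2000 := cnt_step 1999 (by norm_num) (by norm_num) cnt302
theorem cnt304 : 304 ≤ Nat.count Nat.Prime 2004 := cnt_step 2003 (by norm_num) (by norm_num) cnt303
theorem cnt305 : 305 ≤ Nat.count Nat.Prime 2012 := cnt_step 2011 (by norm_num) (by norm_num) cnt304
theorem cnt306 : 306 ≤ Nat.count Nat.Prime 2018 := cnt_step 2017 (by norm_num) (by norm_num) cnt305
theorem cnt307 : 307 ≤ Nat.count Nat.Prime 2028 := cnt_step 2027 (by norm_num) (by norm_num) cnt306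
theorem cnt308 : 308 ≤ Nat.count Nat.Prime 2030 := cnt_step 2029 (by norm_num) (by norm_num) cnt307
theorem cnt309 : 309 ≤ Nat.count Nat.Prime 2040 := cnt_step 2039 (by norm_num) (by norm_num) cnt308
theorem cnt310 : 310 ≤ Nat.count Nat.Prime 2054 := cnt_step 2053 (by norm_num) (by norm_num) cnt309
theorem cnt311 : 311 ≤ Nat.count Nat.Prime 2064 := cnt_step 2063 (by norm_num) (by norm_num) cnt310
theorem cnt312 : 312 ≤ Nat.count Nat.Prime 2070 := cnt_step 2069 (by norm_num) (by norm_num) cnt311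
theorem cnt313 : 313 ≤ Nat.count Nat.Prime 2082 := cnt_step 2081 (by norm_num) (by norm_num) cnt312
theorem cnt314 : 314 ≤ Nat.count Nat.Prime 2084 := cnt_step 2083 (by norm_num) (by norm_num) cnt313
theorem cnt315 : 315 ≤ Nat.count Nat.Prime 2088 := cnt_step 2087 (by norm_num) (by norm_num) cnt314
theorem cnt316 : 316 ≤ Nat.count Nat.Prime 2090 := cnt_step 2089 (by norm_num) (by norm_num) cnt315
theorem cnt317 : 317 ≤ Nat.count Nat.Prime 2100 := cnt_step 2099 (by norm_num) (by norm_num) cnt316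
theorem cnt318 : 318 ≤ Nat.count Nat.Prime 2112 := cnt_step 2111 (by norm_num) (by norm_num) cnt317
theorem cnt319 : 319 ≤ Nat.count Nat.Prime 2114 := cnt_step 2113 (by norm_num) (by norm_num) cnt318
theorem cnt320 : 320 ≤ Nat.count Nat.Prime 2130 := cnt_step 2129 (by norm_num) (by norm_num) cnt319
theorem cnt321 : 321 ≤ Nat.count Nat.Prime 2132 := cnt_step 2131 (by norm_num) (by norm_num) cnt320
theorem cnt322 : 322 ≤ Nat.count Nat.Prime 2138 := cnt_step 2137 (by norm_num) (by norm_num) cnt321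
theorem cnt323 : 323 ≤ Nat.count Nat.Prime 2142 := cnt_step 2141 (by norm_num) (by norm_num) cnt322
theorem cnt324 : 324 ≤ Nat.count Nat.Prime 2144 := cnt_step 2143 (by norm_num) (by norm_num) cnt323
theorem cnt325 : 325 ≤ Nat.count Nat.Prime 2154 := cnt_step 2153 (by norm_num) (by norm_num) cnt324
theorem cnt326 : 326 ≤ Nat.count Nat.Prime 2162 := cnt_step 2161 (by norm_num) (by norm_num) cnt325
theorem cnt327 : 327 ≤ Nat.count Nat.Prime 2180 := cnt_step 2179 (by norm_num) (by norm_num) cnt326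
theorem cnt328 : 328 ≤ Nat.count Nat.Prime 2204 := cnt_step 2203 (by norm_num) (by norm_num) cnt327
theorem cnt329 : 329 ≤ Nat.count Nat.Prime 2208 := cnt_step 2207 (by norm_num) (by norm_num) cnt328
theorem cnt330 : 330 ≤ Nat.count Nat.Prime 2214 := cnt_step 2213 (by norm_num) (by norm_num) cnt329
theorem cnt331 : 331 ≤ Nat.count Nat.Prime 2222 := cnt_step 2221 (by norm_num) (by norm_num) cnt330
theorem cnt332 : 332 ≤ Nat.count Nat.Prime 2238 := cnt_step 2237 (by norm_num) (by norm_num) cnt331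
theorem cnt333 : 333 ≤ Nat.count Nat.Prime 2240 := cnt_step 2239 (by norm_num) (by norm_num) cnt332
theorem cnt334 : 334 ≤ Nat.count Nat.Prime 2244 := cnt_step 2243 (by norm_num) (by norm_num) cnt333
theorem cnt335 : 335 ≤ Nat.count Nat.Prime 2252 := cnt_step 2251 (by norm_num) (by norm_num) cnt334
theorem cnt336 : 336 ≤ Nat.count Nat.Prime 2268 := cnt_step 2267 (by norm_num) (by norm_num) cnt335
theorem cnt337 : 337 ≤ Nat.count Nat.Prime 2270 := cnt_step 2269 (by norm_num) (by norm_num) cnt336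
theorem cnt338 : 338 ≤ Nat.count Nat.Prime 2274 := cnt_step 2273 (by norm_num) (by norm_num) cnt337
theorem cnt339 : 339 ≤ Nat.count Nat.Prime 2282 := cnt_step 2281 (by norm_num) (by norm_num) cnt338
theorem cnt340 : 340 ≤ Nat.count Nat.Prime 2288 := cnt_step 2287 (by norm_num) (by norm_num) cnt339
theorem cnt341 : 341 ≤ Nat.count Nat.Prime 2294 := cnt_step 2293 (by norm_num) (by norm_num) cnt340
theorem cnt342 : 342 ≤ Nat.count Nat.Prime 2298 := cnt_step 2297 (by norm_num) (by norm_num) cnt341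
theorem cnt343 : 343 ≤ Nat.count Nat.Prime 2310 := cnt_step 2309 (by norm_num) (by norm_num) cnt342
theorem cnt344 : 344 ≤ Nat.count Nat.Prime 2312 := cnt_step 2311 (by norm_num) (by norm_num) cnt343
theorem cnt345 : 345 ≤ Nat.count Nat.Prime 2334 := cnt_step 2333 (by norm_num) (by norm_num) cnt344
theorem cnt346 : 346 ≤ Nat.count Nat.Prime 2340 := cnt_step 2339 (by norm_num) (by norm_num) cnt345
theorem cnt347 : 347 ≤ Nat.count Nat.Prime 2342 := cnt_step 2341 (by norm_num) (by norm_num) cnt346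
theorem cnt348 : 348 ≤ Nat.count Nat.Prime 2348 := cnt_step 2347 (by norm_num) (by norm_num) cnt347
theorem cnt349 : 349 ≤ Nat.count Nat.Prime 2352 := cnt_step 2351 (by norm_num) (by norm_num) cnt348
theorem cnt350 : 350 ≤ Nat.count Nat.Prime 2358 := cnt_step 2357 (by norm_num) (by norm_num) cnt349
theorem cnt351 : 351 ≤ Nat.count Nat.Prime 2372 := cnt_step 2371 (by norm_num) (by norm_num) cnt350
theorem cnt352 : 352 ≤ Nat.count Nat.Prime 2378 := cnt_step 2377 (by norm_num) (by norm_num) cnt351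
theorem cnt353 : 353 ≤ Nat.count Nat.Prime 2382 := cnt_step 2381 (by norm_num) (by norm_num) cnt352
theorem cnt354 : 354 ≤ Nat.count Nat.Prime 2384 := cnt_step 2383 (by norm_num) (by norm_num) cnt353
theorem cnt355 : 355 ≤ Nat.count Nat.Prime 2390 := cnt_step 2389 (by norm_num) (by norm_num) cnt354
theorem cnt356 : 356 ≤ Nat.count Nat.Prime 2394 := cnt_step 2393 (by norm_num) (by norm_num) cnt355
theorem cnt357 : 357 ≤ Nat.count Nat.Prime 2400 := cnt_step 2399 (by norm_num) (by norm_num) cnt356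
theorem cnt358 : 358 ≤ Nat.count Nat.Prime 2412 := cnt_step 2411 (by norm_num) (by norm_num) cnt357
theorem cnt359 : 359 ≤ Nat.count Nat.Prime 2418 := cnt_step 2417 (by norm_num) (by norm_num) cnt358
theorem cnt360 : 360 ≤ Nat.count Nat.Prime 2424 := cnt_step 2423 (by norm_num) (by norm_num) cnt359
theorem cnt361 : 361 ≤ Nat.count Nat.Prime 2438 := cnt_step 2437 (by norm_num) (by norm_num) cnt360
theorem cnt362 : 362 ≤ Nat.count Nat.Prime 2442 := cnt_step 2441 (by norm_num) (by norm_num) cnt361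
theorem cnt363 : 363 ≤ Nat.count Nat.Prime 2448 := cnt_step 2447 (by norm_num) (by norm_num) cnt362
theorem cnt364 : 364 ≤ Nat.count Nat.Prime 2460 := cnt_step 2459 (by norm_num) (by norm_num) cnt363
theorem cnt365 : 365 ≤ Nat.count Nat.Prime 2468 := cnt_step 2467 (by norm_num) (by norm_num) cnt364
theorem cnt366 : 366 ≤ Nat.count Nat.Prime 2474 := cnt_step 2473 (by norm_num) (by norm_num) cnt365
theorem cnt367 : 367 ≤ Nat.count Nat.Prime 2478 := cnt_step 2477 (by norm_num) (by norm_num) cnt366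
theorem cnt368 : 368 ≤ Nat.count Nat.Prime 2504 := cnt_step 2503 (by norm_num) (by norm_num) cnt367
theorem cnt369 : 369 ≤ Nat.count Nat.Prime 2522 := cnt_step 2521 (by norm_num) (by norm_num) cnt368
theorem cnt370 : 370 ≤ Nat.count Nat.Prime 2532 := cnt_step 2531 (by norm_num) (by norm_num) cnt369
theorem cnt371 : 371 ≤ Nat.count Nat.Prime 2540 := cnt_step 2539 (by norm_num) (by norm_num) cnt370
theorem cnt372 : 372 ≤ Nat.count Nat.Prime 2544 := cnt_step 2543 (by norm_num) (by norm_num) cnt371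
theorem cnt373 : 373 ≤ Nat.count Nat.Prime 2550 := cnt_step 2549 (by norm_num) (by norm_num) cnt372
theorem cnt374 : 374 ≤ Nat.count Nat.Prime 2552 := cnt_step 2551 (by norm_num) (by norm_num) cnt373
theorem cnt375 : 375 ≤ Nat.count Nat.Prime 2558 := cnt_step 2557 (by norm_num) (by norm_num) cnt374
theorem cnt376 : 376 ≤ Nat.count Nat.Prime 2580 := cnt_step 2579 (by norm_num) (by norm_num) cnt375
theorem cnt377 : 377 ≤ Nat.count Nat.Prime 2592 := cnt_step 2591 (by norm_num) (by norm_num) cnt376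
theorem cnt378 : 378 ≤ Nat.count Nat.Prime 2594 := cnt_step 2593 (by norm_num) (by norm_num) cnt377
theorem cnt379 : 379 ≤ Nat.count Nat.Prime 2610 := cnt_step 2609 (by norm_num) (by norm_num) cnt378
theorem cnt380 : 380 ≤ Nat.count Nat.Prime 2618 := cnt_step 2617 (by norm_num) (by norm_num) cnt379
theorem cnt381 : 381 ≤ Nat.count Nat.Prime 2622 := cnt_step 2621 (by norm_num) (by norm_num) cnt380
theorem cnt382 : 382 ≤ Nat.count Nat.Prime 2634 := cnt_step 2633 (by norm_num) (by norm_num) cnt381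
theorem cnt383 : 383 ≤ Nat.count Nat.Prime 2648 := cnt_step 2647 (by norm_num) (by norm_num) cnt382
theorem cnt384 : 384 ≤ Nat.count Nat.Prime 2658 := cnt_step 2657 (by norm_num) (by norm_num) cnt383
theorem cnt385 : 385 ≤ Nat.count Nat.Prime 2660 := cnt_step 2659 (by norm_num) (by norm_num) cnt384
theorem cnt386 : 386 ≤ Nat.count Nat.Prime 2664 := cnt_step 2663 (by norm_num) (by norm_num) cnt385
theorem cnt387 : 387 ≤ Nat.count Nat.Prime 2672 := cnt_step 2671 (by norm_num) (by norm_num) cnt386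
theorem cnt388 : 388 ≤ Nat.count Nat.Prime 2678 := cnt_step 2677 (by norm_num) (by norm_num) cnt387
theorem cnt389 : 389 ≤ Nat.count Nat.Prime 2684 := cnt_step 2683 (by norm_num) (by norm_num) cnt388
theorem cnt390 : 390 ≤ Nat.count Nat.Prime 2688 := cnt_step 2687 (by norm_num) (by norm_num) cnt389
theorem cnt391 : 391 ≤ Nat.count Nat.Prime 2690 := cnt_step 2689 (by norm_num) (by norm_num) cnt390
theorem cnt392 : 392 ≤ Nat.count Nat.Prime 2694 := cnt_step 2693 (by norm_num) (by norm_num) cnt391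
theorem cnt393 : 393 ≤ Nat.count Nat.Prime 2700 := cnt_step 2699 (by norm_num) (by norm_num) cnt392
theorem cnt394 : 394 ≤ Nat.count Nat.Prime 2708 := cnt_step 2707 (by norm_num) (by norm_num) cnt393
theorem cnt395 : 395 ≤ Nat.count Nat.Prime 2712 := cnt_step 2711 (by norm_num) (by norm_num) cnt394
theorem cnt396 : 396 ≤ Nat.count Nat.Prime 2714 := cnt_step 2713 (by norm_num) (by norm_num) cnt395
theorem cnt397 : 397 ≤ Nat.count Nat.Prime 2720 := cnt_step 2719 (by norm_num) (by norm_num) cnt396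
theorem cnt398 : 398 ≤ Nat.count Nat.Prime 2730 := cnt_step 2729 (by norm_num) (by norm_num) cnt397
theorem cnt399 : 399 ≤ Nat.count Nat.Prime 2732 := cnt_step 2731 (by norm_num) (by norm_num) cnt398
theorem cnt400 : 400 ≤ Nat.count Nat.Prime 2742 := cnt_step 2741 (by norm_num) (by norm_num) cnt399
theorem cnt401 : 401 ≤ Nat.count Nat.Prime 2750 := cnt_step 2749 (by norm_num) (by norm_num) cnt400
theorem cnt402 : 402 ≤ Nat.count Nat.Prime 2754 := cnt_step 2753 (by norm_num) (by norm_num) cnt401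
theorem cnt403 : 403 ≤ Nat.count Nat.Prime 2768 := cnt_step 2767 (by norm_num) (by norm_num) cnt402
theorem cnt404 : 404 ≤ Nat.count Nat.Prime 2778 := cnt_step 2777 (by norm_num) (by norm_num) cnt403
theorem cnt405 : 405 ≤ Nat.count Nat.Prime 2790 := cnt_step 2789 (by norm_num) (by norm_num) cnt404
theorem cnt406 : 406 ≤ Nat.count Nat.Prime 2792 := cnt_step 2791 (by norm_num) (by norm_num) cnt405
theorem cnt407 : 407 ≤ Nat.count Nat.Prime 2798 := cnt_step 2797 (by norm_num) (by norm_num) cnt406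
theorem cnt408 : 408 ≤ Nat.count Nat.Prime 2802 := cnt_step 2801 (by norm_num) (by norm_num) cnt407
theorem cnt409 : 409 ≤ Nat.count Nat.Prime 2804 := cnt_step 2803 (by norm_num) (by norm_num) cnt408
theorem cnt410 : 410 ≤ Nat.count Nat.Prime 2820 := cnt_step 2819 (by norm_num) (by norm_num) cnt409
theorem cnt411 : 411 ≤ Nat.count Nat.Prime 2834 := cnt_step 2833 (by norm_num) (by norm_num) cnt410
theorem cnt412 : 412 ≤ Nat.count Nat.Prime 2838 := cnt_step 2837 (by norm_num) (by norm_num) cnt411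
theorem cnt413 : 413 ≤ Nat.count Nat.Prime 2844 := cnt_step 2843 (by norm_num) (by norm_num) cnt412
theorem cnt414 : 414 ≤ Nat.count Nat.Prime 2852 := cnt_step 2851 (by norm_num) (by norm_num) cnt413
theorem cnt415 : 415 ≤ Nat.count Nat.Prime 2858 := cnt_step 2857 (by norm_num) (by norm_num) cnt414
theorem cnt416 : 416 ≤ Nat.count Nat.Prime 2862 := cnt_step 2861 (by norm_num) (by norm_num) cnt415
theorem cnt417 : 417 ≤ Nat.count Nat.Prime 2880 := cnt_step 2879 (by norm_num) (by norm_num) cnt416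
theorem cnt418 : 418 ≤ Nat.count Nat.Prime 2888 := cnt_step 2887 (by norm_num) (by norm_num) cnt417
theorem cnt419 : 419 ≤ Nat.count Nat.Prime 2898 := cnt_step 2897 (by norm_num) (by norm_num) cnt418
theorem cnt420 : 420 ≤ Nat.count Nat.Prime 2904 := cnt_step 2903 (by norm_num) (by norm_num) cnt419
theorem cnt421 : 421 ≤ Nat.count Nat.Prime 2910 := cnt_step 2909 (by norm_num) (by norm_num) cnt420
theorem cnt422 : 422 ≤ Nat.count Nat.Prime 2918 := cnt_step 2917 (by norm_num) (by norm_num) cnt421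
theorem cnt423 : 423 ≤ Nat.count Nat.Prime 2928 := cnt_step 2927 (by norm_num) (by norm_num) cnt422
theorem cnt424 : 424 ≤ Nat.count Nat.Prime 2940 := cnt_step 2939 (by norm_num) (by norm_num) cnt423
theorem cnt425 : 425 ≤ Nat.count Nat.Prime 2954 := cnt_step 2953 (by norm_num) (by norm_num) cnt424
theorem cnt426 : 426 ≤ Nat.count Nat.Prime 2958 := cnt_step 2957 (by norm_num) (by norm_num) cnt425
theorem cnt427 : 427 ≤ Nat.count Nat.Prime 2964 := cnt_step 2963 (by norm_num) (by norm_num) cnt426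
theorem cnt428 : 428 ≤ Nat.count Nat.Prime 2970 := cnt_step 2969 (by norm_num) (by norm_num) cnt427
theorem cnt429 : 429 ≤ Nat.count Nat.Prime 2972 := cnt_step 2971 (by norm_num) (by norm_num) cnt428
theorem cnt430 : 430 ≤ Nat.count Nat.Prime 3000 := cnt_step 2999 (by norm_num) (by norm_num) cnt429
theorem cnt431 : 431 ≤ Nat.count Nat.Prime 3002 := cnt_step 3001 (by norm_num) (by norm_num) cnt430
theorem cnt432 : 432 ≤ Nat.count Nat.Prime 3012 := cnt_step 3011 (by norm_num) (by norm_num) cnt431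
theorem cnt433 : 433 ≤ Nat.count Nat.Prime 3020 := cnt_step 3019 (by norm_num) (by norm_num) cnt432
theorem cnt434 : 434 ≤ Nat.count Nat.Prime 3024 := cnt_step 3023 (by norm_num) (by norm_num) cnt433
theorem cnt435 : 435 ≤ Nat.count Nat.Prime 3038 := cnt_step 3037 (by norm_num) (by norm_num) cnt434
theorem cnt436 : 436 ≤ Nat.count Nat.Prime 3042 := cnt_step 3041 (by norm_num) (by norm_num) cnt435
theorem cnt437 : 437 ≤ Nat.count Nat.Prime 3050 := cnt_step 3049 (by norm_num) (by norm_num) cnt436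
theorem cnt438 : 438 ≤ Nat.count Nat.Prime 3062 := cnt_step 3061 (by norm_num) (by norm_num) cnt437
theorem cnt439 : 439 ≤ Nat.count Nat.Prime 3068 := cnt_step 3067 (by norm_num) (by norm_num) cnt438
theorem cnt440 : 440 ≤ Nat.count Nat.Prime 3080 := cnt_step 3079 (by norm_num) (by norm_num) cnt439
theorem cnt441 : 441 ≤ Nat.count Nat.Prime 3084 := cnt_step 3083 (by norm_num) (by norm_num) cnt440
theorem cnt442 : 442 ≤ Nat.count Nat.Prime 3090 := cnt_step 3089 (by norm_num) (by norm_num) cnt441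
theorem cnt443 : 443 ≤ Nat.count Nat.Prime 3110 := cnt_step 3109 (by norm_num) (by norm_num) cnt442
theorem cnt444 : 444 ≤ Nat.count Nat.Prime 3120 := cnt_step 3119 (by norm_num) (by norm_num) cnt443
theorem cnt445 : 445 ≤ Nat.count Nat.Prime 3122 := cnt_step 3121 (by norm_num) (by norm_num) cnt444
theorem cnt446 : 446 ≤ Nat.count Nat.Prime 3138 := cnt_step 3137 (by norm_num) (by norm_num) cnt445
theorem cnt447 : 447 ≤ Nat.count Nat.Prime 3164 := cnt_step 3163 (by norm_num) (by norm_num) cnt446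
theorem cnt448 : 448 ≤ Nat.count Nat.Prime 3168 := cnt_step 3167 (by norm_num) (by norm_num) cnt447
theorem cnt449 : 449 ≤ Nat.count Nat.Prime 3170 := cnt_step 3169 (by norm_num) (by norm_num) cnt448
theorem cnt450 : 450 ≤ Nat.count Nat.Prime 3182 := cnt_step 3181 (by norm_num) (by norm_num) cnt449
theorem cnt451 : 451 ≤ Nat.count Nat.Prime 3188 := cnt_step 3187 (by norm_num) (by norm_num) cnt450
theorem cnt452 : 452 ≤ Nat.count Nat.Prime 3192 := cnt_step 3191 (by norm_num) (by norm_num) cnt451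
theorem cnt453 : 453 ≤ Nat.count Nat.Prime 3204 := cnt_step 3203 (by norm_num) (by norm_num) cnt452
theorem cnt454 : 454 ≤ Nat.count Nat.Prime 3210 := cnt_step 3209 (by norm_num) (by norm_num) cnt453
theorem cnt455 : 455 ≤ Nat.count Nat.Prime 3218 := cnt_step 3217 (by norm_num) (by norm_num) cnt454
theorem cnt456 : 456 ≤ Nat.count Nat.Prime 3222 := cnt_step 3221 (by norm_num) (by norm_num) cnt455
theorem cnt457 : 457 ≤ Nat.count Nat.Prime 3230 := cnt_step 3229 (by norm_num) (by norm_num) cnt456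
theorem cnt458 : 458 ≤ Nat.count Nat.Prime 3252 := cnt_step 3251 (by norm_num) (by norm_num) cnt457
theorem cnt459 : 459 ≤ Nat.count Nat.Prime 3254 := cnt_step 3253 (by norm_num) (by norm_num) cnt458
theorem cnt460 : 460 ≤ Nat.count Nat.Prime 3258 := cnt_step 3257 (by norm_num) (by norm_num) cnt459
theorem cnt461 : 461 ≤ Nat.count Nat.Prime 3260 := cnt_step 3259 (by norm_num) (by norm_num) cnt460
theorem cnt462 : 462 ≤ Nat.count Nat.Prime 3272 := cnt_step 3271 (by norm_num) (by norm_num) cnt461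
theorem cnt463 : 463 ≤ Nat.count Nat.Prime 3300 := cnt_step 3299 (by norm_num) (by norm_num) cnt462
theorem cnt464 : 464 ≤ Nat.count Nat.Prime 3302 := cnt_step 3301 (by norm_num) (by norm_num) cnt463
theorem cnt465 : 465 ≤ Nat.count Nat.Prime 3308 := cnt_step 3307 (by norm_num) (by norm_num) cnt464
theorem cnt466 : 466 ≤ Nat.count Nat.Prime 3314 := cnt_step 3313 (by norm_num) (by norm_num) cnt465
theorem cnt467 : 467 ≤ Nat.count Nat.Prime 3320 := cnt_step 3319 (by norm_num) (by norm_num) cnt466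
theorem cnt468 : 468 ≤ Nat.count Nat.Prime 3324 := cnt_step 3323 (by norm_num) (by norm_num) cnt467
theorem cnt469 : 469 ≤ Nat.count Nat.Prime 3330 := cnt_step 3329 (by norm_num) (by norm_num) cnt468
theorem cnt470 : 470 ≤ Nat.count Nat.Prime 3332 := cnt_step 3331 (by norm_num) (by norm_num) cnt469
theorem cnt471 : 471 ≤ Nat.count Nat.Prime 3344 := cnt_step 3343 (by norm_num) (by norm_num) cnt470
theorem cnt472 : 472 ≤ Nat.count Nat.Prime 3348 := cnt_step 3347 (by norm_num) (by norm_num) cnt471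
theorem cnt473 : 473 ≤ Nat.count Nat.Prime 3360 := cnt_step 3359 (by norm_num) (by norm_num) cnt472
theorem cnt474 : 474 ≤ Nat.count Nat.Prime 3362 := cnt_step 3361 (by norm_num) (by norm_num) cnt473
theorem cnt475 : 475 ≤ Nat.count Nat.Prime 3372 := cnt_step 3371 (by norm_num) (by norm_num) cnt474
theorem cnt476 : 476 ≤ Nat.count Nat.Prime 3374 := cnt_step 3373 (by norm_num) (by norm_num) cnt475
theorem cnt477 : 477 ≤ Nat.count Nat.Prime 3390 := cnt_step 3389 (by norm_num) (by norm_num) cnt476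
theorem cnt478 : 478 ≤ Nat.count Nat.Prime 3392 := cnt_step 3391 (by norm_num) (by norm_num) cnt477
theorem cnt479 : 479 ≤ Nat.count Nat.Prime 3408 := cnt_step 3407 (by norm_num) (by norm_num) cnt478
theorem cnt480 : 480 ≤ Nat.count Nat.Prime 3414 := cnt_step 3413 (by norm_num) (by norm_num) cnt479
theorem cnt481 : 481 ≤ Nat.count Nat.Prime 3434 := cnt_step 3433 (by norm_num) (by norm_num) cnt480
theorem cnt482 : 482 ≤ Nat.count Nat.Prime 3450 := cnt_step 3449 (by norm_num) (by norm_num) cnt481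
theorem cnt483 : 483 ≤ Nat.count Nat.Prime 3458 := cnt_step 3457 (by norm_num) (by norm_num) cnt482
theorem cnt484 : 484 ≤ Nat.count Nat.Prime 3462 := cnt_step 3461 (by norm_num) (by norm_num) cnt483
theorem cnt485 : 485 ≤ Nat.count Nat.Prime 3464 := cnt_step 3463 (by norm_num) (by norm_num) cnt484
theorem cnt486 : 486 ≤ Nat.count Nat.Prime 3468 := cnt_step 3467 (by norm_num) (by norm_num) cnt485
theorem cnt487 : 487 ≤ Nat.count Nat.Prime 3470 := cnt_step 3469 (by norm_num) (by norm_num) cnt486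
theorem cnt488 : 488 ≤ Nat.count Nat.Prime 3492 := cnt_step 3491 (by norm_num) (by norm_num) cnt487
theorem cnt489 : 489 ≤ Nat.count Nat.Prime 3500 := cnt_step 3499 (by norm_num) (by norm_num) cnt488
theorem cnt490 : 490 ≤ Nat.count Nat.Prime 3512 := cnt_step 3511 (by norm_num) (by norm_num) cnt489
theorem cnt491 : 491 ≤ Nat.count Nat.Prime 3518 := cnt_step 3517 (by norm_num) (by norm_num) cnt490
theorem cnt492 : 492 ≤ Nat.count Nat.Prime 3528 := cnt_step 3527 (by norm_num) (by norm_num) cnt491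
theorem cnt493 : 493 ≤ Nat.count Nat.Prime 3530 := cnt_step 3529 (by norm_num) (by norm_num) cnt492
theorem cnt494 : 494 ≤ Nat.count Nat.Prime 3534 := cnt_step 3533 (by norm_num) (by norm_num) cnt493
theorem cnt495 : 495 ≤ Nat.count Nat.Prime 3540 := cnt_step 3539 (by norm_num) (by norm_num) cnt494
theorem cnt496 : 496 ≤ Nat.count Nat.Prime 3542 := cnt_step 3541 (by norm_num) (by norm_num) cnt495
theorem cnt497 : 497 ≤ Nat.count Nat.Prime 3548 := cnt_step 3547 (by norm_num) (by norm_num) cnt496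
theorem cnt498 : 498 ≤ Nat.count Nat.Prime 3558 := cnt_step 3557 (by norm_num) (by norm_num) cnt497
theorem cnt499 : 499 ≤ Nat.count Nat.Prime 3560 := cnt_step 3559 (by norm_num) (by norm_num) cnt498
theorem cnt500 : 500 ≤ Nat.count Nat.Prime 3572 := cnt_step 3571 (by norm_num) (by norm_num) cnt499
theorem cnt501 : 501 ≤ Nat.count Nat.Prime 3582 := cnt_step 3581 (by norm_num) (by norm_num) cnt500
theorem cnt502 : 502 ≤ Nat.count Nat.Prime 3584 := cnt_step 3583 (by norm_num) (by norm_num) cnt501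
theorem cnt503 : 503 ≤ Nat.count Nat.Prime 3594 := cnt_step 3593 (by norm_num) (by norm_num) cnt502
theorem cnt504 : 504 ≤ Nat.count Nat.Prime 3608 := cnt_step 3607 (by norm_num) (by norm_num) cnt503
theorem cnt505 : 505 ≤ Nat.count Nat.Prime 3614 := cnt_step 3613 (by norm_num) (by norm_num) cnt504
theorem cnt506 : 506 ≤ Nat.count Nat.Prime 3618 := cnt_step 3617 (by norm_num) (by norm_num) cnt505
theorem cnt507 : 507 ≤ Nat.count Nat.Prime 3624 := cnt_step 3623 (by norm_num) (by norm_num) cnt506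
theorem cnt508 : 508 ≤ Nat.count Nat.Prime 3632 := cnt_step 3631 (by norm_num) (by norm_num) cnt507
theorem cnt509 : 509 ≤ Nat.count Nat.Prime 3638 := cnt_step 3637 (by norm_num) (by norm_num) cnt508
theorem cnt510 : 510 ≤ Nat.count Nat.Prime 3644 := cnt_step 3643 (by norm_num) (by norm_num) cnt509
theorem cnt511 : 511 ≤ Nat.count Nat.Prime 3660 := cnt_step 3659 (by norm_num) (by norm_num) cnt510
theorem cnt512 : 512 ≤ Nat.count Nat.Prime 3672 := cnt_step 3671 (by norm_num) (by norm_num) cnt511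
theorem cnt513 : 513 ≤ Nat.count Nat.Prime 3674 := cnt_step 3673 (by norm_num) (by norm_num) cnt512
theorem cnt514 : 514 ≤ Nat.count Nat.Prime 3678 := cnt_step 3677 (by norm_num) (by norm_num) cnt513
theorem cnt515 : 515 ≤ Nat.count Nat.Prime 3692 := cnt_step 3691 (by norm_num) (by norm_num) cnt514
theorem cnt516 : 516 ≤ Nat.count Nat.Prime 3698 := cnt_step 3697 (by norm_num) (by norm_num) cnt515
theorem cnt517 : 517 ≤ Nat.count Nat.Prime 3702 := cnt_step 3701 (by norm_num) (by norm_num) cnt516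
theorem cnt518 : 518 ≤ Nat.count Nat.Prime 3710 := cnt_step 3709 (by norm_num) (by norm_num) cnt517
theorem cnt519 : 519 ≤ Nat.count Nat.Prime 3720 := cnt_step 3719 (by norm_num) (by norm_num) cnt518
theorem cnt520 : 520 ≤ Nat.count Nat.Prime 3728 := cnt_step 3727 (by norm_num) (by norm_num) cnt519
theorem cnt521 : 521 ≤ Nat.count Nat.Prime 3734 := cnt_step 3733 (by norm_num) (by norm_num) cnt520
theorem cnt522 : 522 ≤ Nat.count Nat.Prime 3740 := cnt_step 3739 (by norm_num) (by norm_num) cnt521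
theorem cnt523 : 523 ≤ Nat.count Nat.Prime 3762 := cnt_step 3761 (by norm_num) (by norm_num) cnt522
theorem cnt524 : 524 ≤ Nat.count Nat.Prime 3768 := cnt_step 3767 (by norm_num) (by norm_num) cnt523
theorem cnt525 : 525 ≤ Nat.count Nat.Prime 3770 := cnt_step 3769 (by norm_num) (by norm_num) cnt524
theorem cnt526 : 526 ≤ Nat.count Nat.Prime 3780 := cnt_step 3779 (by norm_num) (by norm_num) cnt525
theorem cnt527 : 527 ≤ Nat.count Nat.Prime 3794 := cnt_step 3793 (by norm_num) (by norm_num) cnt526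
theorem cnt528 : 528 ≤ Nat.count Nat.Prime 3798 := cnt_step 3797 (by norm_num) (by norm_num) cnt527
theorem cnt529 : 529 ≤ Nat.count Nat.Prime 3804 := cnt_step 3803 (by norm_num) (by norm_num) cnt528
theorem cnt530 : 530 ≤ Nat.count Nat.Prime 3822 := cnt_step 3821 (by norm_num) (by norm_num) cnt529
theorem cnt531 : 531 ≤ Nat.count Nat.Prime 3824 := cnt_step 3823 (by norm_num) (by norm_num) cnt530
theorem cnt532 : 532 ≤ Nat.count Nat.Prime 3834 := cnt_step 3833 (by norm_num) (by norm_num) cnt531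
theorem cnt533 : 533 ≤ Nat.count Nat.Prime 3848 := cnt_step 3847 (by norm_num) (by norm_num) cnt532
theorem cnt534 : 534 ≤ Nat.count Nat.Prime 3852 := cnt_step 3851 (by norm_num) (by norm_num) cnt533
theorem cnt535 : 535 ≤ Nat.count Nat.Prime 3854 := cnt_step 3853 (by norm_num) (by norm_num) cnt534
theorem cnt536 : 536 ≤ Nat.count Nat.Prime 3864 := cnt_step 3863 (by norm_num) (by norm_num) cnt535
theorem cnt537 : 537 ≤ Nat.count Nat.Prime 3878 := cnt_step 3877 (by norm_num) (by norm_num) cnt536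
theorem cnt538 : 538 ≤ Nat.count Nat.Prime 3882 := cnt_step 3881 (by norm_num) (by norm_num) cnt537
theorem cnt539 : 539 ≤ Nat.count Nat.Prime 3890 := cnt_step 3889 (by norm_num) (by norm_num) cnt538
theorem cnt540 : 540 ≤ Nat.count Nat.Prime 3908 := cnt_step 3907 (by norm_num) (by norm_num) cnt539
theorem cnt541 : 541 ≤ Nat.count Nat.Prime 3912 := cnt_step 3911 (by norm_num) (by norm_num) cnt540
theorem cnt542 : 542 ≤ Nat.count Nat.Prime 3918 := cnt_step 3917 (by norm_num) (by norm_num) cnt541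
theorem cnt543 : 543 ≤ Nat.count Nat.Prime 3920 := cnt_step 3919 (by norm_num) (by norm_num) cnt542
theorem cnt544 : 544 ≤ Nat.count Nat.Prime 3924 := cnt_step 3923 (by norm_num) (by norm_num) cnt543
theorem cnt545 : 545 ≤ Nat.count Nat.Prime 3930 := cnt_step 3929 (by norm_num) (by norm_num) cnt544
theorem cnt546 : 546 ≤ Nat.count Nat.Prime 3932 := cnt_step 3931 (by norm_num) (by norm_num) cnt545
theorem cnt547 : 547 ≤ Nat.count Nat.Prime 3944 := cnt_step 3943 (by norm_num) (by norm_num) cnt546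
theorem cnt548 : 548 ≤ Nat.count Nat.Prime 3948 := cnt_step 3947 (by norm_num) (by norm_num) cnt547
theorem cnt549 : 549 ≤ Nat.count Nat.Prime 3968 := cnt_step 3967 (by norm_num) (by norm_num) cnt548
theorem cnt550 : 550 ≤ Nat.count Nat.Prime 3990 := cnt_step 3989 (by norm_num) (by norm_num) cnt549
theorem cnt551 : 551 ≤ Nat.count Nat.Prime 4002 := cnt_step 4001 (by norm_num) (by norm_num) cnt550
theorem cnt552 : 552 ≤ Nat.count Nat.Prime 4004 := cnt_step 4003 (by norm_num) (by norm_num) cnt551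
theorem cnt553 : 553 ≤ Nat.count Nat.Prime 4008 := cnt_step 4007 (by norm_num) (by norm_num) cnt552
theorem cnt554 : 554 ≤ Nat.count Nat.Prime 4014 := cnt_step 4013 (by norm_num) (by norm_num) cnt553
theorem cnt555 : 555 ≤ Nat.count Nat.Prime 4020 := cnt_step 4019 (by norm_num) (by norm_num) cnt554
theorem cnt556 : 556 ≤ Nat.count Nat.Prime 4022 := cnt_step 4021 (by norm_num) (by norm_num) cnt555
theorem cnt557 : 557 ≤ Nat.count Nat.Prime 4028 := cnt_step 4027 (by norm_num) (by norm_num) cnt556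
theorem cnt558 : 558 ≤ Nat.count Nat.Prime 4050 := cnt_step 4049 (by norm_num) (by norm_num) cnt557
theorem cnt559 : 559 ≤ Nat.count Nat.Prime 4052 := cnt_step 4051 (by norm_num) (by norm_num) cnt558
theorem cnt560 : 560 ≤ Nat.count Nat.Prime 4058 := cnt_step 4057 (by norm_num) (by norm_num) cnt559
theorem cnt561 : 561 ≤ Nat.count Nat.Prime 4074 := cnt_step 4073 (by norm_num) (by norm_num) cnt560
theorem cnt562 : 562 ≤ Nat.count Nat.Prime 4080 := cnt_step 4079 (by norm_num) (by norm_num) cnt561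
theorem cnt563 : 563 ≤ Nat.count Nat.Prime 4092 := cnt_step 4091 (by norm_num) (by norm_num) cnt562
theorem cnt564 : 564 ≤ Nat.count Nat.Prime 4094 := cnt_step 4093 (by norm_num) (by norm_num) cnt563
theorem cnt565 : 565 ≤ Nat.count Nat.Prime 4100 := cnt_step 4099 (by norm_num) (by norm_num) cnt564
theorem cnt566 : 566 ≤ Nat.count Nat.Prime 4112 := cnt_step 4111 (by norm_num) (by norm_num) cnt565
theorem cnt567 : 567 ≤ Nat.count Nat.Prime 4128 := cnt_step 4127 (by norm_num) (by norm_num) cnt566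
theorem cnt568 : 568 ≤ Nat.count Nat.Prime 4130 := cnt_step 4129 (by norm_num) (by norm_num) cnt567
theorem cnt569 : 569 ≤ Nat.count Nat.Prime 4134 := cnt_step 4133 (by norm_num) (by norm_num) cnt568
theorem cnt570 : 570 ≤ Nat.count Nat.Prime 4140 := cnt_step 4139 (by norm_num) (by norm_num) cnt569
theorem cnt571 : 571 ≤ Nat.count Nat.Prime 4154 := cnt_step 4153 (by norm_num) (by norm_num) cnt570
theorem cnt572 : 572 ≤ Nat.count Nat.Prime 4158 := cnt_step 4157 (by norm_num) (by norm_num) cnt571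
theorem cnt573 : 573 ≤ Nat.count Nat.Prime 4160 := cnt_step 4159 (by norm_num) (by norm_num) cnt572
theorem cnt574 : 574 ≤ Nat.count Nat.Prime 4178 := cnt_step 4177 (by norm_num) (by norm_num) cnt573
theorem cnt575 : 575 ≤ Nat.count Nat.Prime 4202 := cnt_step 4201 (by norm_num) (by norm_num) cnt574
theorem cnt576 : 576 ≤ Nat.count Nat.Prime 4212 := cnt_step 4211 (by norm_num) (by norm_num) cnt575
theorem cnt577 : 577 ≤ Nat.count Nat.Prime 4218 := cnt_step 4217 (by norm_num) (by norm_num) cnt576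
theorem cnt578 : 578 ≤ Nat.count Nat.Prime 4220 := cnt_step 4219 (by norm_num) (by norm_num) cnt577
theorem cnt579 : 579 ≤ Nat.count Nat.Prime 4230 := cnt_step 4229 (by norm_num) (by norm_num) cnt578
theorem cnt580 : 580 ≤ Nat.count Nat.Prime 4232 := cnt_step 4231 (by norm_num) (by norm_num) cnt579
theorem cnt581 : 581 ≤ Nat.count Nat.Prime 4242 := cnt_step 4241 (by norm_num) (by norm_num) cnt580
theorem cnt582 : 582 ≤ Nat.count Nat.Prime 4244 := cnt_step 4243 (by norm_num) (by norm_num) cnt581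
theorem cnt583 : 583 ≤ Nat.count Nat.Prime 4254 := cnt_step 4253 (by norm_num) (by norm_num) cnt582
theorem cnt584 : 584 ≤ Nat.count Nat.Prime 4260 := cnt_step 4259 (by norm_num) (by norm_num) cnt583
theorem cnt585 : 585 ≤ Nat.count Nat.Prime 4262 := cnt_step 4261 (by norm_num) (by norm_num) cnt584
theorem cnt586 : 586 ≤ Nat.count Nat.Prime 4272 := cnt_step 4271 (by norm_num) (by norm_num) cnt585
theorem cnt587 : 587 ≤ Nat.count Nat.Prime 4274 := cnt_step 4273 (by norm_num) (by norm_num) cnt586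
theorem cnt588 : 588 ≤ Nat.count Nat.Prime 4284 := cnt_step 4283 (by norm_num) (by norm_num) cnt587
theorem cnt589 : 589 ≤ Nat.count Nat.Prime 4290 := cnt_step 4289 (by norm_num) (by norm_num) cnt588
theorem cnt590 : 590 ≤ Nat.count Nat.Prime 4298 := cnt_step 4297 (by norm_num) (by norm_num) cnt589
theorem cnt591 : 591 ≤ Nat.count Nat.Prime 4328 := cnt_step 4327 (by norm_num) (by norm_num) cnt590
theorem cnt592 : 592 ≤ Nat.count Nat.Prime 4338 := cnt_step 4337 (by norm_num) (by norm_num) cnt591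
theorem cnt593 : 593 ≤ Nat.count Nat.Prime 4340 := cnt_step 4339 (by norm_num) (by norm_num) cnt592
theorem cnt594 : 594 ≤ Nat.count Nat.Prime 4350 := cnt_step 4349 (by norm_num) (by norm_num) cnt593
theorem cnt595 : 595 ≤ Nat.count Nat.Prime 4358 := cnt_step 4357 (by norm_num) (by norm_num) cnt594
theorem cnt596 : 596 ≤ Nat.count Nat.Prime 4364 := cnt_step 4363 (by norm_num) (by norm_num) cnt595
theorem cnt597 : 597 ≤ Nat.count Nat.Prime 4374 := cnt_step 4373 (by norm_num) (by norm_num) cnt596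
theorem cnt598 : 598 ≤ Nat.count Nat.Prime 4392 := cnt_step 4391 (by norm_num) (by norm_num) cnt597
theorem cnt599 : 599 ≤ Nat.count Nat.Prime 4398 := cnt_step 4397 (by norm_num) (by norm_num) cnt598
theorem cnt600 : 600 ≤ Nat.count Nat.Prime 4410 := cnt_step 4409 (by norm_num) (by norm_num) cnt599
theorem cnt601 : 601 ≤ Nat.count Nat.Prime 4422 := cnt_step 4421 (by norm_num) (by norm_num) cnt600
theorem cnt602 : 602 ≤ Nat.count Nat.Prime 4424 := cnt_step 4423 (by norm_num) (by norm_num) cnt601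
theorem cnt603 : 603 ≤ Nat.count Nat.Prime 4442 := cnt_step 4441 (by norm_num) (by norm_num) cnt602
theorem cnt604 : 604 ≤ Nat.count Nat.Prime 4448 := cnt_step 4447 (by norm_num) (by norm_num) cnt603
theorem cnt605 : 605 ≤ Nat.count Nat.Prime 4452 := cnt_step 4451 (by norm_num) (by norm_num) cnt604
theorem cnt606 : 606 ≤ Nat.count Nat.Prime 4458 := cnt_step 4457 (by norm_num) (by norm_num) cnt605
theorem cnt607 : 607 ≤ Nat.count Nat.Prime 4464 := cnt_step 4463 (by norm_num) (by norm_num) cnt606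
theorem cnt608 : 608 ≤ Nat.count Nat.Prime 4482 := cnt_step 4481 (by norm_num) (by norm_num) cnt607
theorem cnt609 : 609 ≤ Nat.count Nat.Prime 4484 := cnt_step 4483 (by norm_num) (by norm_num) cnt608
theorem cnt610 : 610 ≤ Nat.count Nat.Prime 4494 := cnt_step 4493 (by norm_num) (by norm_num) cnt609
theorem cnt611 : 611 ≤ Nat.count Nat.Prime 4508 := cnt_step 4507 (by norm_num) (by norm_num) cnt610
theorem cnt612 : 612 ≤ Nat.count Nat.Prime 4514 := cnt_step 4513 (by norm_num) (by norm_num) cnt611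
theorem cnt613 : 613 ≤ Nat.count Nat.Prime 4518 := cnt_step 4517 (by norm_num) (by norm_num) cnt612
theorem cnt614 : 614 ≤ Nat.count Nat.Prime 4520 := cnt_step 4519 (by norm_num) (by norm_num) cnt613
theorem cnt615 : 615 ≤ Nat.count Nat.Prime 4524 := cnt_step 4523 (by norm_num) (by norm_num) cnt614
theorem cnt616 : 616 ≤ Nat.count Nat.Prime 4548 := cnt_step 4547 (by norm_num) (by norm_num) cnt615
theorem cnt617 : 617 ≤ Nat.count Nat.Prime 4550 := cnt_step 4549 (by norm_num) (by norm_num) cnt616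
theorem cnt618 : 618 ≤ Nat.count Nat.Prime 4562 := cnt_step 4561 (by norm_num) (by norm_num) cnt617
theorem cnt619 : 619 ≤ Nat.count Nat.Prime 4568 := cnt_step 4567 (by norm_num) (by norm_num) cnt618
theorem cnt620 : 620 ≤ Nat.count Nat.Prime 4584 := cnt_step 4583 (by norm_num) (by norm_num) cnt619
theorem cnt621 : 621 ≤ Nat.count Nat.Prime 4592 := cnt_step 4591 (by norm_num) (by norm_num) cnt620
theorem cnt622 : 622 ≤ Nat.count Nat.Prime 4598 := cnt_step 4597 (by norm_num) (by norm_num) cnt621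
theorem cnt623 : 623 ≤ Nat.count Nat.Prime 4604 := cnt_step 4603 (by norm_num) (by norm_num) cnt622
theorem cnt624 : 624 ≤ Nat.count Nat.Prime 4622 := cnt_step 4621 (by norm_num) (by norm_num) cnt623
theorem cnt625 : 625 ≤ Nat.count Nat.Prime 4638 := cnt_step 4637 (by norm_num) (by norm_num) cnt624
theorem cnt626 : 626 ≤ Nat.count Nat.Prime 4640 := cnt_step 4639 (by norm_num) (by norm_num) cnt625
theorem cnt627 : 627 ≤ Nat.count Nat.Prime 4644 := cnt_step 4643 (by norm_num) (by norm_num) cnt626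
theorem cnt628 : 628 ≤ Nat.count Nat.Prime 4650 := cnt_step 4649 (by norm_num) (by norm_num) cnt627
theorem cnt629 : 629 ≤ Nat.count Nat.Prime 4652 := cnt_step 4651 (by norm_num) (by norm_num) cnt628
theorem cnt630 : 630 ≤ Nat.count Nat.Prime 4658 := cnt_step 4657 (by norm_num) (by norm_num) cnt629
theorem cnt631 : 631 ≤ Nat.count Nat.Prime 4664 := cnt_step 4663 (by norm_num) (by norm_num) cnt630
theorem cnt632 : 632 ≤ Nat.count Nat.Prime 4674 := cnt_step 4673 (by norm_num) (by norm_num) cnt631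
theorem cnt633 : 633 ≤ Nat.count Nat.Prime 4680 := cnt_step 4679 (by norm_num) (by norm_num) cnt632
theorem cnt634 : 634 ≤ Nat.count Nat.Prime 4692 := cnt_step 4691 (by norm_num) (by norm_num) cnt633
theorem cnt635 : 635 ≤ Nat.count Nat.Prime 4704 := cnt_step 4703 (by norm_num) (by norm_num) cnt634
theorem cnt636 : 636 ≤ Nat.count Nat.Prime 4722 := cnt_step 4721 (by norm_num) (by norm_num) cnt635
theorem cnt637 : 637 ≤ Nat.count Nat.Prime 4724 := cnt_step 4723 (by norm_num) (by norm_num) cnt636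
theorem cnt638 : 638 ≤ Nat.count Nat.Prime 4730 := cnt_step 4729 (by norm_num) (by norm_num) cnt637
theorem cnt639 : 639 ≤ Nat.count Nat.Prime 4734 := cnt_step 4733 (by norm_num) (by norm_num) cnt638
theorem cnt640 : 640 ≤ Nat.count Nat.Prime 4752 := cnt_step 4751 (by norm_num) (by norm_num) cnt639
theorem cnt641 : 641 ≤ Nat.count Nat.Prime 4760 := cnt_step 4759 (by norm_num) (by norm_num) cnt640
theorem cnt642 : 642 ≤ Nat.count Nat.Prime 4784 := cnt_step 4783 (by norm_num) (by norm_num) cnt641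
theorem cnt643 : 643 ≤ Nat.count Nat.Prime 4788 := cnt_step 4787 (by norm_num) (by norm_num) cnt642
theorem cnt644 : 644 ≤ Nat.count Nat.Prime 4790 := cnt_step 4789 (by norm_num) (by norm_num) cnt643
theorem cnt645 : 645 ≤ Nat.count Nat.Prime 4794 := cnt_step 4793 (by norm_num) (by norm_num) cnt644
theorem cnt646 : 646 ≤ Nat.count Nat.Prime 4800 := cnt_step 4799 (by norm_num) (by norm_num) cnt645
theorem cnt647 : 647 ≤ Nat.count Nat.Prime 4802 := cnt_step 4801 (by norm_num) (by norm_num) cnt646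
theorem cnt648 : 648 ≤ Nat.count Nat.Prime 4814 := cnt_step 4813 (by norm_num) (by norm_num) cnt647
theorem cnt649 : 649 ≤ Nat.count Nat.Prime 4818 := cnt_step 4817 (by norm_num) (by norm_num) cnt648
theorem cnt650 : 650 ≤ Nat.count Nat.Prime 4832 := cnt_step 4831 (by norm_num) (by norm_num) cnt649
theorem cnt651 : 651 ≤ Nat.count Nat.Prime 4862 := cnt_step 4861 (by norm_num) (by norm_num) cnt650
theorem cnt652 : 652 ≤ Nat.count Nat.Prime 4872 := cnt_step 4871 (by norm_num) (by norm_num) cnt651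
theorem cnt653 : 653 ≤ Nat.count Nat.Prime 4878 := cnt_step 4877 (by norm_num) (by norm_num) cnt652
theorem cnt654 : 654 ≤ Nat.count Nat.Prime 4890 := cnt_step 4889 (by norm_num) (by norm_num) cnt653
theorem cnt655 : 655 ≤ Nat.count Nat.Prime 4904 := cnt_step 4903 (by norm_num) (by norm_num) cnt654
theorem cnt656 : 656 ≤ Nat.count Nat.Prime 4910 := cnt_step 4909 (by norm_num) (by norm_num) cnt655
theorem cnt657 : 657 ≤ Nat.count Nat.Prime 4920 := cnt_step 4919 (by norm_num) (by norm_num) cnt656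
theorem cnt658 : 658 ≤ Nat.count Nat.Prime 4932 := cnt_step 4931 (by norm_num) (by norm_num) cnt657
theorem cnt659 : 659 ≤ Nat.count Nat.Prime 4934 := cnt_step 4933 (by norm_num) (by norm_num) cnt658
theorem cnt660 : 660 ≤ Nat.count Nat.Prime 4938 := cnt_step 4937 (by norm_num) (by norm_num) cnt659
theorem cnt661 : 661 ≤ Nat.count Nat.Prime 4944 := cnt_step 4943 (by norm_num) (by norm_num) cnt660
theorem cnt662 : 662 ≤ Nat.count Nat.Prime 4952 := cnt_step 4951 (by norm_num) (by norm_num) cnt661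
theorem cnt663 : 663 ≤ Nat.count Nat.Prime 4958 := cnt_step 4957 (by norm_num) (by norm_num) cnt662
theorem cnt664 : 664 ≤ Nat.count Nat.Prime 4968 := cnt_step 4967 (by norm_num) (by norm_num) cnt663
theorem cnt665 : 665 ≤ Nat.count Nat.Prime 4970 := cnt_step 4969 (by norm_num) (by norm_num) cnt664
theorem cnt666 : 666 ≤ Nat.count Nat.Prime 4974 := cnt_step 4973 (by norm_num) (by norm_num) cnt665
theorem cnt667 : 667 ≤ Nat.count Nat.Prime 4988 := cnt_step 4987 (by norm_num) (by norm_num) cnt666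
theorem cnt668 : 668 ≤ Nat.count Nat.Prime 4994 := cnt_step 4993 (by norm_num) (by norm_num) cnt667
theorem cnt669 : 669 ≤ Nat.count Nat.Prime 5000 := cnt_step 4999 (by norm_num) (by norm_num) cnt668
theorem cnt670 : 670 ≤ Nat.count Nat.Prime 5004 := cnt_step 5003 (by norm_num) (by norm_num) cnt669
theorem cnt671 : 671 ≤ Nat.count Nat.Prime 5010 := cnt_step 5009 (by norm_num) (by norm_num) cnt670
theorem cnt672 : 672 ≤ Nat.count Nat.Prime 5012 := cnt_step 5011 (by norm_num) (by norm_num) cnt671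
theorem cnt673 : 673 ≤ Nat.count Nat.Prime 5022 := cnt_step 5021 (by norm_num) (by norm_num) cnt672
theorem cnt674 : 674 ≤ Nat.count Nat.Prime 5024 := cnt_step 5023 (by norm_num) (by norm_num) cnt673
theorem cnt675 : 675 ≤ Nat.count Nat.Prime 5040 := cnt_step 5039 (by norm_num) (by norm_num) cnt674
theorem cnt676 : 676 ≤ Nat.count Nat.Prime 5052 := cnt_step 5051 (by norm_num) (by norm_num) cnt675
theorem cnt677 : 677 ≤ Nat.count Nat.Prime 5060 := cnt_step 5059 (by norm_num) (by norm_num) cnt676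
theorem cnt678 : 678 ≤ Nat.count Nat.Prime 5078 := cnt_step 5077 (by norm_num) (by norm_num) cnt677
theorem cnt679 : 679 ≤ Nat.count Nat.Prime 5082 := cnt_step 5081 (by norm_num) (by norm_num) cnt678
theorem cnt680 : 680 ≤ Nat.count Nat.Prime 5088 := cnt_step 5087 (by norm_num) (by norm_num) cnt679
theorem cnt681 : 681 ≤ Nat.count Nat.Prime 5100 := cnt_step 5099 (by norm_num) (by norm_num) cnt680
theorem cnt682 : 682 ≤ Nat.count Nat.Prime 5102 := cnt_step 5101 (by norm_num) (by norm_num) cnt681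
theorem cnt683 : 683 ≤ Nat.count Nat.Prime 5108 := cnt_step 5107 (by norm_num) (by norm_num) cnt682
theorem cnt684 : 684 ≤ Nat.count Nat.Prime 5114 := cnt_step 5113 (by norm_num) (by norm_num) cnt683
theorem cnt685 : 685 ≤ Nat.count Nat.Prime 5120 := cnt_step 5119 (by norm_num) (by norm_num) cnt684
theorem cnt686 : 686 ≤ Nat.count Nat.Prime 5148 := cnt_step 5147 (by norm_num) (by norm_num) cnt685
theorem cnt687 : 687 ≤ Nat.count Nat.Prime 5154 := cnt_step 5153 (by norm_num) (by norm_num) cnt686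
theorem cnt688 : 688 ≤ Nat.count Nat.Prime 5168 := cnt_step 5167 (by norm_num) (by norm_num) cnt687
theorem cnt689 : 689 ≤ Nat.count Nat.Prime 5172 := cnt_step 5171 (by norm_num) (by norm_num) cnt688
theorem cnt690 : 690 ≤ Nat.count Nat.Prime 5180 := cnt_step 5179 (by norm_num) (by norm_num) cnt689
theorem cnt691 : 691 ≤ Nat.count Nat.Prime 5190 := cnt_step 5189 (by norm_num) (by norm_num) cnt690
theorem cnt692 : 692 ≤ Nat.count Nat.Prime 5198 := cnt_step 5197 (by norm_num) (by norm_num) cnt691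
theorem cnt693 : 693 ≤ Nat.count Nat.Prime 5210 := cnt_step 5209 (by norm_num) (by norm_num) cnt692
theorem cnt694 : 694 ≤ Nat.count Nat.Prime 5228 := cnt_step 5227 (by norm_num) (by norm_num) cnt693
theorem cnt695 : 695 ≤ Nat.count Nat.Prime 5232 := cnt_step 5231 (by norm_num) (by norm_num) cnt694
theorem cnt696 : 696 ≤ Nat.count Nat.Prime 5234 := cnt_step 5233 (by norm_num) (by norm_num) cnt695
theorem cnt697 : 697 ≤ Nat.count Nat.Prime 5238 := cnt_step 5237 (by norm_num) (by norm_num) cnt696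
theorem cnt698 : 698 ≤ Nat.count Nat.Prime 5262 := cnt_step 5261 (by norm_num) (by norm_num) cnt697
theorem cnt699 : 699 ≤ Nat.count Nat.Prime 5274 := cnt_step 5273 (by norm_num) (by norm_num) cnt698
theorem cnt700 : 700 ≤ Nat.count Nat.Prime 5280 := cnt_step 5279 (by norm_num) (by norm_num) cnt699
theorem cnt701 : 701 ≤ Nat.count Nat.Prime 5282 := cnt_step 5281 (by norm_num) (by norm_num) cnt700
theorem cnt702 : 702 ≤ Nat.count Nat.Prime 5298 := cnt_step 5297 (by norm_num) (by norm_num) cnt701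
theorem cnt703 : 703 ≤ Nat.count Nat.Prime 5304 := cnt_step 5303 (by norm_num) (by norm_num) cnt702
theorem cnt704 : 704 ≤ Nat.count Nat.Prime 5310 := cnt_step 5309 (by norm_num) (by norm_num) cnt703
theorem cnt705 : 705 ≤ Nat.count Nat.Prime 5324 := cnt_step 5323 (by norm_num) (by norm_num) cnt704
theorem cnt706 : 706 ≤ Nat.count Nat.Prime 5334 := cnt_step 5333 (by norm_num) (by norm_num) cnt705
theorem cnt707 : 707 ≤ Nat.count Nat.Prime 5348 := cnt_step 5347 (by norm_num) (by norm_num) cnt706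
theorem cnt708 : 708 ≤ Nat.count Nat.Prime 5352 := cnt_step 5351 (by norm_num) (by norm_num) cnt707
theorem cnt709 : 709 ≤ Nat.count Nat.Prime 5382 := cnt_step 5381 (by norm_num) (by norm_num) cnt708
theorem cnt710 : 710 ≤ Nat.count Nat.Prime 5388 := cnt_step 5387 (by norm_num) (by norm_num) cnt709
theorem cnt711 : 711 ≤ Nat.count Nat.Prime 5394 := cnt_step 5393 (by norm_num) (by norm_num) cnt710
theorem cnt712 : 712 ≤ Nat.count Nat.Prime 5400 := cnt_step 5399 (by norm_num) (by norm_num) cnt711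
theorem cnt713 : 713 ≤ Nat.count Nat.Prime 5408 := cnt_step 5407 (by norm_num) (by norm_num) cnt712
theorem cnt714 : 714 ≤ Nat.count Nat.Prime 5414 := cnt_step 5413 (by norm_num) (by norm_num) cnt713
theorem cnt715 : 715 ≤ Nat.count Nat.Prime 5418 := cnt_step 5417 (by norm_num) (by norm_num) cnt714
theorem cnt716 : 716 ≤ Nat.count Nat.Prime 5420 := cnt_step 5419 (by norm_num) (by norm_num) cnt715
theorem cnt717 : 717 ≤ Nat.count Nat.Prime 5432 := cnt_step 5431 (by norm_num) (by norm_num) cnt716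
theorem cnt718 : 718 ≤ Nat.count Nat.Prime 5438 := cnt_step 5437 (by norm_num) (by norm_num) cnt717
theorem cnt719 : 719 ≤ Nat.count Nat.Prime 5442 := cnt_step 5441 (by norm_num) (by norm_num) cnt718
theorem cnt720 : 720 ≤ Nat.count Nat.Prime 5444 := cnt_step 5443 (by norm_num) (by norm_num) cnt719
theorem cnt721 : 721 ≤ Nat.count Nat.Prime 5450 := cnt_step 5449 (by norm_num) (by norm_num) cnt720
theorem cnt722 : 722 ≤ Nat.count Nat.Prime 5472 := cnt_step 5471 (by norm_num) (by norm_num) cnt721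
theorem cnt723 : 723 ≤ Nat.count Nat.Prime 5478 := cnt_step 5477 (by norm_num) (by norm_num) cnt722
theorem cnt724 : 724 ≤ Nat.count Nat.Prime 5480 := cnt_step 5479 (by norm_num) (by norm_num) cnt723
theorem cnt725 : 725 ≤ Nat.count Nat.Prime 5484 := cnt_step 5483 (by norm_num) (by norm_num) cnt724
theorem cnt726 : 726 ≤ Nat.count Nat.Prime 5502 := cnt_step 5501 (by norm_num) (by norm_num) cnt725
theorem cnt727 : 727 ≤ Nat.count Nat.Prime 5504 := cnt_step 5503 (by norm_num) (by norm_num) cnt726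
theorem cnt728 : 728 ≤ Nat.count Nat.Prime 5508 := cnt_step 5507 (by norm_num) (by norm_num) cnt727
theorem cnt729 : 729 ≤ Nat.count Nat.Prime 5520 := cnt_step 5519 (by norm_num) (by norm_num) cnt728
theorem cnt730 : 730 ≤ Nat.count Nat.Prime 5522 := cnt_step 5521 (by norm_num) (by norm_num) cnt729
theorem cnt731 : 731 ≤ Nat.count Nat.Prime 5528 := cnt_step 5527 (by norm_num) (by norm_num) cnt730
theorem cnt732 : 732 ≤ Nat.count Nat.Prime 5532 := cnt_step 5531 (by norm_num) (by norm_num) cnt731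
theorem cnt733 : 733 ≤ Nat.count Nat.Prime 5558 := cnt_step 5557 (by norm_num) (by norm_num) cnt732
theorem cnt734 : 734 ≤ Nat.count Nat.Prime 5564 := cnt_step 5563 (by norm_num) (by norm_num) cnt733
theorem cnt735 : 735 ≤ Nat.count Nat.Prime 5570 := cnt_step 5569 (by norm_num) (by norm_num) cnt734
theorem cnt736 : 736 ≤ Nat.count Nat.Prime 5574 := cnt_step 5573 (by norm_num) (by norm_num) cnt735
theorem cnt737 : 737 ≤ Nat.count Nat.Prime 5582 := cnt_step 5581 (by norm_num) (by norm_num) cnt736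
theorem cnt738 : 738 ≤ Nat.count Nat.Prime 5592 := cnt_step 5591 (by norm_num) (by norm_num) cnt737
theorem cnt739 : 739 ≤ Nat.count Nat.Prime 5624 := cnt_step 5623 (by norm_num) (by norm_num) cnt738
theorem cnt740 : 740 ≤ Nat.count Nat.Prime 5640 := cnt_step 5639 (by norm_num) (by norm_num) cnt739
theorem cnt741 : 741 ≤ Nat.count Nat.Prime 5642 := cnt_step 5641 (by norm_num) (by norm_num) cnt740
theorem cnt742 : 742 ≤ Nat.count Nat.Prime 5648 := cnt_step 5647 (by norm_num) (by norm_num) cnt741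
theorem cnt743 : 743 ≤ Nat.count Nat.Prime 5652 := cnt_step 5651 (by norm_num) (by norm_num) cnt742
theorem cnt744 : 744 ≤ Nat.count Nat.Prime 5654 := cnt_step 5653 (by norm_num) (by norm_num) cnt743
theorem cnt745 : 745 ≤ Nat.count Nat.Prime 5658 := cnt_step 5657 (by norm_num) (by norm_num) cnt744
theorem cnt746 : 746 ≤ Nat.count Nat.Prime 5660 := cnt_step 5659 (by norm_num) (by norm_num) cnt745
theorem cnt747 : 747 ≤ Nat.count Nat.Prime 5670 := cnt_step 5669 (by norm_num) (by norm_num) cnt746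
theorem cnt748 : 748 ≤ Nat.count Nat.Prime 5684 := cnt_step 5683 (by norm_num) (by norm_num) cnt747
theorem cnt749 : 749 ≤ Nat.count Nat.Prime 5690 := cnt_step 5689 (by norm_num) (by norm_num) cnt748
theorem cnt750 : 750 ≤ Nat.count Nat.Prime 5694 := cnt_step 5693 (by norm_num) (by norm_num) cnt749
theorem cnt751 : 751 ≤ Nat.count Nat.Prime 5702 := cnt_step 5701 (by norm_num) (by norm_num) cnt750
theorem cnt752 : 752 ≤ Nat.count Nat.Prime 5712 := cnt_step 5711 (by norm_num) (by norm_num) cnt751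
theorem cnt753 : 753 ≤ Nat.count Nat.Prime 5718 := cnt_step 5717 (by norm_num) (by norm_num) cnt752
theorem cnt754 : 754 ≤ Nat.count Nat.Prime 5738 := cnt_step 5737 (by norm_num) (by norm_num) cnt753
theorem cnt755 : 755 ≤ Nat.count Nat.Prime 5742 := cnt_step 5741 (by norm_num) (by norm_num) cnt754
theorem cnt756 : 756 ≤ Nat.count Nat.Prime 5744 := cnt_step 5743 (by norm_num) (by norm_num) cnt755
theorem cnt757 : 757 ≤ Nat.count Nat.Prime 5750 := cnt_step 5749 (by norm_num) (by norm_num) cnt756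
theorem cnt758 : 758 ≤ Nat.count Nat.Prime 5780 := cnt_step 5779 (by norm_num) (by norm_num) cnt757
theorem cnt759 : 759 ≤ Nat.count Nat.Prime 5784 := cnt_step 5783 (by norm_num) (by norm_num) cnt758
theorem cnt760 : 760 ≤ Nat.count Nat.Prime 5792 := cnt_step 5791 (by norm_num) (by norm_num) cnt759
theorem cnt761 : 761 ≤ Nat.count Nat.Prime 5802 := cnt_step 5801 (by norm_num) (by norm_num) cnt760
theorem cnt762 : 762 ≤ Nat.count Nat.Prime 5808 := cnt_step 5807 (by norm_num) (by norm_num) cnt761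
theorem cnt763 : 763 ≤ Nat.count Nat.Prime 5814 := cnt_step 5813 (by norm_num) (by norm_num) cnt762
theorem cnt764 : 764 ≤ Nat.count Nat.Prime 5822 := cnt_step 5821 (by norm_num) (by norm_num) cnt763
theorem cnt765 : 765 ≤ Nat.count Nat.Prime 5828 := cnt_step 5827 (by norm_num) (by norm_num) cnt764
theorem cnt766 : 766 ≤ Nat.count Nat.Prime 5840 := cnt_step 5839 (by norm_num) (by norm_num) cnt765
theorem cnt767 : 767 ≤ Nat.count Nat.Prime 5844 := cnt_step 5843 (by norm_num) (by norm_num) cnt766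
theorem cnt768 : 768 ≤ Nat.count Nat.Prime 5850 := cnt_step 5849 (by norm_num) (by norm_num) cnt767
theorem cnt769 : 769 ≤ Nat.count Nat.Prime 5852 := cnt_step 5851 (by norm_num) (by norm_num) cnt768
theorem cnt770 : 770 ≤ Nat.count Nat.Prime 5858 := cnt_step 5857 (by norm_num) (by norm_num) cnt769
theorem cnt771 : 771 ≤ Nat.count Nat.Prime 5862 := cnt_step 5861 (by norm_num) (by norm_num) cnt770
theorem cnt772 : 772 ≤ Nat.count Nat.Prime 5868 := cnt_step 5867 (by norm_num) (by norm_num) cnt771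
theorem cnt773 : 773 ≤ Nat.count Nat.Prime 5870 := cnt_step 5869 (by norm_num) (by norm_num) cnt772
theorem cnt774 : 774 ≤ Nat.count Nat.Prime 5880 := cnt_step 5879 (by norm_num) (by norm_num) cnt773
theorem cnt775 : 775 ≤ Nat.count Nat.Prime 5882 := cnt_step 5881 (by norm_num) (by norm_num) cnt774
theorem cnt776 : 776 ≤ Nat.count Nat.Prime 5898 := cnt_step 5897 (by norm_num) (by norm_num) cnt775
theorem cnt777 : 777 ≤ Nat.count Nat.Prime 5904 := cnt_step 5903 (by norm_num) (by norm_num) cnt776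
theorem cnt778 : 778 ≤ Nat.count Nat.Prime 5924 := cnt_step 5923 (by norm_num) (by norm_num) cnt777
theorem cnt779 : 779 ≤ Nat.count Nat.Prime 5928 := cnt_step 5927 (by norm_num) (by norm_num) cnt778
theorem cnt780 : 780 ≤ Nat.count Nat.Prime 5940 := cnt_step 5939 (by norm_num) (by norm_num) cnt779
theorem cnt781 : 781 ≤ Nat.count Nat.Prime 5954 := cnt_step 5953 (by norm_num) (by norm_num) cnt780
theorem cnt782 : 782 ≤ Nat.count Nat.Prime 5982 := cnt_step 5981 (by norm_num) (by norm_num) cnt781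
theorem cnt783 : 783 ≤ Nat.count Nat.Prime 5988 := cnt_step 5987 (by norm_num) (by norm_num) cnt782
theorem cnt784 : 784 ≤ Nat.count Nat.Prime 6008 := cnt_step 6007 (by norm_num) (by norm_num) cnt783
theorem cnt785 : 785 ≤ Nat.count Nat.Prime 6012 := cnt_step 6011 (by norm_num) (by norm_num) cnt784
theorem cnt786 : 786 ≤ Nat.count Nat.Prime 6030 := cnt_step 6029 (by norm_num) (by norm_num) cnt785
theorem cnt787 : 787 ≤ Nat.count Nat.Prime 6038 := cnt_step 6037 (by norm_num) (by norm_num) cnt786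
theorem cnt788 : 788 ≤ Nat.count Nat.Prime 6044 := cnt_step 6043 (by norm_num) (by norm_num) cnt787
theorem cnt789 : 789 ≤ Nat.count Nat.Prime 6048 := cnt_step 6047 (by norm_num) (by norm_num) cnt788
theorem cnt790 : 790 ≤ Nat.count Nat.Prime 6054 := cnt_step 6053 (by norm_num) (by norm_num) cnt789
theorem cnt791 : 791 ≤ Nat.count Nat.Prime 6068 := cnt_step 6067 (by norm_num) (by norm_num) cnt790
theorem cnt792 : 792 ≤ Nat.count Nat.Prime 6074 := cnt_step 6073 (by norm_num) (by norm_num) cnt791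
theorem cnt793 : 793 ≤ Nat.count Nat.Prime 6080 := cnt_step 6079 (by norm_num) (by norm_num) cnt792
theorem cnt794 : 794 ≤ Nat.count Nat.Prime 6090 := cnt_step 6089 (by norm_num) (by norm_num) cnt793
theorem cnt795 : 795 ≤ Nat.count Nat.Prime 6092 := cnt_step 6091 (by norm_num) (by norm_num) cnt794
theorem cnt796 : 796 ≤ Nat.count Nat.Prime 6102 := cnt_step 6101 (by norm_num) (by norm_num) cnt795
theorem cnt797 : 797 ≤ Nat.count Nat.Prime 6114 := cnt_step 6113 (by norm_num) (by norm_num) cnt796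
theorem cnt798 : 798 ≤ Nat.count Nat.Prime 6122 := cnt_step 6121 (by norm_num) (by norm_num) cnt797
theorem cnt799 : 799 ≤ Nat.count Nat.Prime 6132 := cnt_step 6131 (by norm_num) (by norm_num) cnt798
theorem cnt800 : 800 ≤ Nat.count Nat.Prime 6134 := cnt_step 6133 (by norm_num) (by norm_num) cnt799
theorem cnt801 : 801 ≤ Nat.count Nat.Prime 6144 := cnt_step 6143 (by norm_num) (by norm_num) cnt800
theorem cnt802 : 802 ≤ Nat.count Nat.Prime 6152 := cnt_step 6151 (by norm_num) (by norm_num) cnt801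
theorem cnt803 : 803 ≤ Nat.count Nat.Prime 6164 := cnt_step 6163 (by norm_num) (by norm_num) cnt802
theorem cnt804 : 804 ≤ Nat.count Nat.Prime 6174 := cnt_step 6173 (by norm_num) (by norm_num) cnt803
theorem cnt805 : 805 ≤ Nat.count Nat.Prime 6198 := cnt_step 6197 (by norm_num) (by norm_num) cnt804
theorem cnt806 : 806 ≤ Nat.count Nat.Prime 6200 := cnt_step 6199 (by norm_num) (by norm_num) cnt805
theorem cnt807 : 807 ≤ Nat.count Nat.Prime 6204 := cnt_step 6203 (by norm_num) (by norm_num) cnt806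
theorem cnt808 : 808 ≤ Nat.count Nat.Prime 6212 := cnt_step 6211 (by norm_num) (by norm_num) cnt807
theorem cnt809 : 809 ≤ Nat.count Nat.Prime 6218 := cnt_step 6217 (by norm_num) (by norm_num) cnt808
theorem cnt810 : 810 ≤ Nat.count Nat.Prime 6222 := cnt_step 6221 (by norm_num) (by norm_num) cnt809
theorem cnt811 : 811 ≤ Nat.count Nat.Prime 6230 := cnt_step 6229 (by norm_num) (by norm_num) cnt810
theorem cnt812 : 812 ≤ Nat.count Nat.Prime 6248 := cnt_step 6247 (by norm_num) (by norm_num) cnt811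
theorem cnt813 : 813 ≤ Nat.count Nat.Prime 6258 := cnt_step 6257 (by norm_num) (by norm_num) cnt812
theorem cnt814 : 814 ≤ Nat.count Nat.Prime 6264 := cnt_step 6263 (by norm_num) (by norm_num) cnt813
theorem cnt815 : 815 ≤ Nat.count Nat.Prime 6270 := cnt_step 6269 (by norm_num) (by norm_num) cnt814
theorem cnt816 : 816 ≤ Nat.count Nat.Prime 6272 := cnt_step 6271 (by norm_num) (by norm_num) cnt815
theorem cnt817 : 817 ≤ Nat.count Nat.Prime 6278 := cnt_step 6277 (by norm_num) (by norm_num) cnt816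
theorem cnt818 : 818 ≤ Nat.count Nat.Prime 6288 := cnt_step 6287 (by norm_num) (by norm_num) cnt817
theorem cnt819 : 819 ≤ Nat.count Nat.Prime 6300 := cnt_step 6299 (by norm_num) (by norm_num) cnt818
theorem cnt820 : 820 ≤ Nat.count Nat.Prime 6302 := cnt_step 6301 (by norm_num) (by norm_num) cnt819
theorem cnt821 : 821 ≤ Nat.count Nat.Prime 6312 := cnt_step 6311 (by norm_num) (by norm_num) cnt820
theorem cnt822 : 822 ≤ Nat.count Nat.Prime 6318 := cnt_step 6317 (by norm_num) (by norm_num) cnt821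
theorem cnt823 : 823 ≤ Nat.count Nat.Prime 6324 := cnt_step 6323 (by norm_num) (by norm_num) cnt822
theorem cnt824 : 824 ≤ Nat.count Nat.Prime 6330 := cnt_step 6329 (by norm_num) (by norm_num) cnt823
theorem cnt825 : 825 ≤ Nat.count Nat.Prime 6338 := cnt_step 6337 (by norm_num) (by norm_num) cnt824
theorem cnt826 : 826 ≤ Nat.count Nat.Prime 6344 := cnt_step 6343 (by norm_num) (by norm_num) cnt825
theorem cnt827 : 827 ≤ Nat.count Nat.Prime 6354 := cnt_step 6353 (by norm_num) (by norm_num) cnt826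
theorem cnt828 : 828 ≤ Nat.count Nat.Prime 6360 := cnt_step 6359 (by norm_num) (by norm_num) cnt827
theorem cnt829 : 829 ≤ Nat.count Nat.Prime 6362 := cnt_step 6361 (by norm_num) (by norm_num) cnt828
theorem cnt830 : 830 ≤ Nat.count Nat.Prime 6368 := cnt_step 6367 (by norm_num) (by norm_num) cnt829
theorem cnt831 : 831 ≤ Nat.count Nat.Prime 6374 := cnt_step 6373 (by norm_num) (by norm_num) cnt830
theorem cnt832 : 832 ≤ Nat.count Nat.Prime 6380 := cnt_step 6379 (by norm_num) (by norm_num) cnt831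
theorem cnt833 : 833 ≤ Nat.count Nat.Prime 6390 := cnt_step 6389 (by norm_num) (by norm_num) cnt832
theorem cnt834 : 834 ≤ Nat.count Nat.Prime 6398 := cnt_step 6397 (by norm_num) (by norm_num) cnt833
theorem cnt835 : 835 ≤ Nat.count Nat.Prime 6422 := cnt_step 6421 (by norm_num) (by norm_num) cnt834
theorem cnt836 : 836 ≤ Nat.count Nat.Prime 6428 := cnt_step 6427 (by norm_num) (by norm_num) cnt835
theorem cnt837 : 837 ≤ Nat.count Nat.Prime 6450 := cnt_step 6449 (by norm_num) (by norm_num) cnt836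
theorem cnt838 : 838 ≤ Nat.count Nat.Prime 6452 := cnt_step 6451 (by norm_num) (by norm_num) cnt837
theorem cnt839 : 839 ≤ Nat.count Nat.Prime 6470 := cnt_step 6469 (by norm_num) (by norm_num) cnt838
theorem cnt840 : 840 ≤ Nat.count Nat.Prime 6474 := cnt_step 6473 (by norm_num) (by norm_num) cnt839
theorem cnt841 : 841 ≤ Nat.count Nat.Prime 6482 := cnt_step 6481 (by norm_num) (by norm_num) cnt840
theorem cnt842 : 842 ≤ Nat.count Nat.Prime 6492 := cnt_step 6491 (by norm_num) (by norm_num) cnt841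
theorem cnt843 : 843 ≤ Nat.count Nat.Prime 6522 := cnt_step 6521 (by norm_num) (by norm_num) cnt842
theorem cnt844 : 844 ≤ Nat.count Nat.Prime 6530 := cnt_step 6529 (by norm_num) (by norm_num) cnt843
theorem cnt845 : 845 ≤ Nat.count Nat.Prime 6548 := cnt_step 6547 (by norm_num) (by norm_num) cnt844
theorem cnt846 : 846 ≤ Nat.count Nat.Prime 6552 := cnt_step 6551 (by norm_num) (by norm_num) cnt845
theorem cnt847 : 847 ≤ Nat.count Nat.Prime 6554 := cnt_step 6553 (by norm_num) (by norm_num) cnt846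
theorem cnt848 : 848 ≤ Nat.count Nat.Prime 6564 := cnt_step 6563 (by norm_num) (by norm_num) cnt847
theorem cnt849 : 849 ≤ Nat.count Nat.Prime 6570 := cnt_step 6569 (by norm_num) (by norm_num) cnt848
theorem cnt850 : 850 ≤ Nat.count Nat.Prime 6572 := cnt_step 6571 (by norm_num) (by norm_num) cnt849
theorem cnt851 : 851 ≤ Nat.count Nat.Prime 6578 := cnt_step 6577 (by norm_num) (by norm_num) cnt850
theorem cnt852 : 852 ≤ Nat.count Nat.Prime 6582 := cnt_step 6581 (by norm_num) (by norm_num) cnt851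
theorem cnt853 : 853 ≤ Nat.count Nat.Prime 6600 := cnt_step 6599 (by norm_num) (by norm_num) cnt852
theorem cnt854 : 854 ≤ Nat.count Nat.Prime 6608 := cnt_step 6607 (by norm_num) (by norm_num) cnt853
theorem cnt855 : 855 ≤ Nat.count Nat.Prime 6620 := cnt_step 6619 (by norm_num) (by norm_num) cnt854
theorem cnt856 : 856 ≤ Nat.count Nat.Prime 6638 := cnt_step 6637 (by norm_num) (by norm_num) cnt855
theorem cnt857 : 857 ≤ Nat.count Nat.Prime 6654 := cnt_step 6653 (by norm_num) (by norm_num) cnt856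
theorem cnt858 : 858 ≤ Nat.count Nat.Prime 6660 := cnt_step 6659 (by norm_num) (by norm_num) cnt857
theorem cnt859 : 859 ≤ Nat.count Nat.Prime 6662 := cnt_step 6661 (by norm_num) (by norm_num) cnt858
theorem cnt860 : 860 ≤ Nat.count Nat.Prime 6674 := cnt_step 6673 (by norm_num) (by norm_num) cnt859
theorem cnt861 : 861 ≤ Nat.count Nat.Prime 6680 := cnt_step 6679 (by norm_num) (by norm_num) cnt860
theorem cnt862 : 862 ≤ Nat.count Nat.Prime 6690 := cnt_step 6689 (by norm_num) (by norm_num) cnt861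
theorem cnt863 : 863 ≤ Nat.count Nat.Prime 6692 := cnt_step 6691 (by norm_num) (by norm_num) cnt862
theorem cnt864 : 864 ≤ Nat.count Nat.Prime 6702 := cnt_step 6701 (by norm_num) (by norm_num) cnt863
theorem cnt865 : 865 ≤ Nat.count Nat.Prime 6704 := cnt_step 6703 (by norm_num) (by norm_num) cnt864
theorem cnt866 : 866 ≤ Nat.count Nat.Prime 6710 := cnt_step 6709 (by norm_num) (by norm_num) cnt865
theorem cnt867 : 867 ≤ Nat.count Nat.Prime 6720 := cnt_step 6719 (by norm_num) (by norm_num) cnt866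
theorem cnt868 : 868 ≤ Nat.count Nat.Prime 6734 := cnt_step 6733 (by norm_num) (by norm_num) cnt867
theorem cnt869 : 869 ≤ Nat.count Nat.Prime 6738 := cnt_step 6737 (by norm_num) (by norm_num) cnt868
theorem cnt870 : 870 ≤ Nat.count Nat.Prime 6762 := cnt_step 6761 (by norm_num) (by norm_num) cnt869
theorem cnt871 : 871 ≤ Nat.count Nat.Prime 6764 := cnt_step 6763 (by norm_num) (by norm_num) cnt870
theorem cnt872 : 872 ≤ Nat.count Nat.Prime 6780 := cnt_step 6779 (by norm_num) (by norm_num) cnt871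
theorem cnt873 : 873 ≤ Nat.count Nat.Prime 6782 := cnt_step 6781 (by norm_num) (by norm_num) cnt872
theorem cnt874 : 874 ≤ Nat.count Nat.Prime 6792 := cnt_step 6791 (by norm_num) (by norm_num) cnt873
theorem cnt875 : 875 ≤ Nat.count Nat.Prime 6794 := cnt_step 6793 (by norm_num) (by norm_num) cnt874
theorem cnt876 : 876 ≤ Nat.count Nat.Prime 6804 := cnt_step 6803 (by norm_num) (by norm_num) cnt875
theorem cnt877 : 877 ≤ Nat.count Nat.Prime 6824 := cnt_step 6823 (by norm_num) (by norm_num) cnt876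
theorem cnt878 : 878 ≤ Nat.count Nat.Prime 6828 := cnt_step 6827 (by norm_num) (by norm_num) cnt877
theorem cnt879 : 879 ≤ Nat.count Nat.Prime 6830 := cnt_step 6829 (by norm_num) (by norm_num) cnt878
theorem cnt880 : 880 ≤ Nat.count Nat.Prime 6834 := cnt_step 6833 (by norm_num) (by norm_num) cnt879
theorem cnt881 : 881 ≤ Nat.count Nat.Prime 6842 := cnt_step 6841 (by norm_num) (by norm_num) cnt880
theorem cnt882 : 882 ≤ Nat.count Nat.Prime 6858 := cnt_step 6857 (by norm_num) (by norm_num) cnt881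
theorem cnt883 : 883 ≤ Nat.count Nat.Prime 6864 := cnt_step 6863 (by norm_num) (by norm_num) cnt882
theorem cnt884 : 884 ≤ Nat.count Nat.Prime 6870 := cnt_step 6869 (by norm_num) (by norm_num) cnt883
theorem cnt885 : 885 ≤ Nat.count Nat.Prime 6872 := cnt_step 6871 (by norm_num) (by norm_num) cnt884
theorem cnt886 : 886 ≤ Nat.count Nat.Prime 6884 := cnt_step 6883 (by norm_num) (by norm_num) cnt885
theorem cnt887 : 887 ≤ Nat.count Nat.Prime 6900 := cnt_step 6899 (by norm_num) (by norm_num) cnt886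
theorem cnt888 : 888 ≤ Nat.count Nat.Prime 6908 := cnt_step 6907 (by norm_num) (by norm_num) cnt887
theorem cnt889 : 889 ≤ Nat.count Nat.Prime 6912 := cnt_step 6911 (by norm_num) (by norm_num) cnt888
theorem cnt890 : 890 ≤ Nat.count Nat.Prime 6918 := cnt_step 6917 (by norm_num) (by norm_num) cnt889
theorem cnt891 : 891 ≤ Nat.count Nat.Prime 6948 := cnt_step 6947 (by norm_num) (by norm_num) cnt890
theorem cnt892 : 892 ≤ Nat.count Nat.Prime 6950 := cnt_step 6949 (by norm_num) (by norm_num) cnt891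
theorem cnt893 : 893 ≤ Nat.count Nat.Prime 6960 := cnt_step 6959 (by norm_num) (by norm_num) cnt892
theorem cnt894 : 894 ≤ Nat.count Nat.Prime 6962 := cnt_step 6961 (by norm_num) (by norm_num) cnt893
theorem cnt895 : 895 ≤ Nat.count Nat.Prime 6968 := cnt_step 6967 (by norm_num) (by norm_num) cnt894
theorem cnt896 : 896 ≤ Nat.count Nat.Prime 6972 := cnt_step 6971 (by norm_num) (by norm_num) cnt895
theorem cnt897 : 897 ≤ Nat.count Nat.Prime 6978 := cnt_step 6977 (by norm_num) (by norm_num) cnt896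
theorem cnt898 : 898 ≤ Nat.count Nat.Prime 6984 := cnt_step 6983 (by norm_num) (by norm_num) cnt897
theorem cnt899 : 899 ≤ Nat.count Nat.Prime 6992 := cnt_step 6991 (by norm_num) (by norm_num) cnt898
theorem cnt900 : 900 ≤ Nat.count Nat.Prime 6998 := cnt_step 6997 (by norm_num) (by norm_num) cnt899
theorem cnt901 : 901 ≤ Nat.count Nat.Prime 7002 := cnt_step 7001 (by norm_num) (by norm_num) cnt900
theorem cnt902 : 902 ≤ Nat.count Nat.Prime 7014 := cnt_step 7013 (by norm_num) (by norm_num) cnt901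
theorem cnt903 : 903 ≤ Nat.count Nat.Prime 7020 := cnt_step 7019 (by norm_num) (by norm_num) cnt902
theorem cnt904 : 904 ≤ Nat.count Nat.Prime 7028 := cnt_step 7027 (by norm_num) (by norm_num) cnt903
theorem cnt905 : 905 ≤ Nat.count Nat.Prime 7040 := cnt_step 7039 (by norm_num) (by norm_num) cnt904
theorem cnt906 : 906 ≤ Nat.count Nat.Prime 7044 := cnt_step 7043 (by norm_num) (by norm_num) cnt905
theorem cnt907 : 907 ≤ Nat.count Nat.Prime 7058 := cnt_step 7057 (by norm_num) (by norm_num) cnt906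
theorem cnt908 : 908 ≤ Nat.count Nat.Prime 7070 := cnt_step 7069 (by norm_num) (by norm_num) cnt907
theorem cnt909 : 909 ≤ Nat.count Nat.Prime 7080 := cnt_step 7079 (by norm_num) (by norm_num) cnt908
theorem cnt910 : 910 ≤ Nat.count Nat.Prime 7104 := cnt_step 7103 (by norm_num) (by norm_num) cnt909
theorem cnt911 : 911 ≤ Nat.count Nat.Prime 7110 := cnt_step 7109 (by norm_num) (by norm_num) cnt910
theorem cnt912 : 912 ≤ Nat.count Nat.Prime 7122 := cnt_step 7121 (by norm_num) (by norm_num) cnt911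
theorem cnt913 : 913 ≤ Nat.count Nat.Prime 7128 := cnt_step 7127 (by norm_num) (by norm_num) cnt912
theorem cnt914 : 914 ≤ Nat.count Nat.Prime 7130 := cnt_step 7129 (by norm_num) (by norm_num) cnt913
theorem cnt915 : 915 ≤ Nat.count Nat.Prime 7152 := cnt_step 7151 (by norm_num) (by norm_num) cnt914
theorem cnt916 : 916 ≤ Nat.count Nat.Prime 7160 := cnt_step 7159 (by norm_num) (by norm_num) cnt915
theorem cnt917 : 917 ≤ Nat.count Nat.Prime 7178 := cnt_step 7177 (by norm_num) (by norm_num) cnt916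
theorem cnt918 : 918 ≤ Nat.count Nat.Prime 7188 := cnt_step 7187 (by norm_num) (by norm_num) cnt917
theorem cnt919 : 919 ≤ Nat.count Nat.Prime 7194 := cnt_step 7193 (by norm_num) (by norm_num) cnt918
theorem cnt920 : 920 ≤ Nat.count Nat.Prime 7208 := cnt_step 7207 (by norm_num) (by norm_num) cnt919
theorem cnt921 : 921 ≤ Nat.count Nat.Prime 7212 := cnt_step 7211 (by norm_num) (by norm_num) cnt920
theorem cnt922 : 922 ≤ Nat.count Nat.Prime 7214 := cnt_step 7213 (by norm_num) (by norm_num) cnt921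
theorem cnt923 : 923 ≤ Nat.count Nat.Prime 7220 := cnt_step 7219 (by norm_num) (by norm_num) cnt922
theorem cnt924 : 924 ≤ Nat.count Nat.Prime 7230 := cnt_step 7229 (by norm_num) (by norm_num) cnt923
theorem cnt925 : 925 ≤ Nat.count Nat.Prime 7238 := cnt_step 7237 (by norm_num) (by norm_num) cnt924
theorem cnt926 : 926 ≤ Nat.count Nat.Prime 7244 := cnt_step 7243 (by norm_num) (by norm_num) cnt925
theorem cnt927 : 927 ≤ Nat.count Nat.Prime 7248 := cnt_step 7247 (by norm_num) (by norm_num) cnt926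
theorem cnt928 : 928 ≤ Nat.count Nat.Prime 7254 := cnt_step 7253 (by norm_num) (by norm_num) cnt927
theorem cnt929 : 929 ≤ Nat.count Nat.Prime 7284 := cnt_step 7283 (by norm_num) (by norm_num) cnt928
theorem cnt930 : 930 ≤ Nat.count Nat.Prime 7298 := cnt_step 7297 (by norm_num) (by norm_num) cnt929
theorem cnt931 : 931 ≤ Nat.count Nat.Prime 7308 := cnt_step 7307 (by norm_num) (by norm_num) cnt930
theorem cnt932 : 932 ≤ Nat.count Nat.Prime 7310 := cnt_step 7309 (by norm_num) (by norm_num) cnt931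
theorem cnt933 : 933 ≤ Nat.count Nat.Prime 7322 := cnt_step 7321 (by norm_num) (by norm_num) cnt932
theorem cnt934 : 934 ≤ Nat.count Nat.Prime 7332 := cnt_step 7331 (by norm_num) (by norm_num) cnt933
theorem cnt935 : 935 ≤ Nat.count Nat.Prime 7334 := cnt_step 7333 (by norm_num) (by norm_num) cnt934
theorem cnt936 : 936 ≤ Nat.count Nat.Prime 7350 := cnt_step 7349 (by norm_num) (by norm_num) cnt935
theorem cnt937 : 937 ≤ Nat.count Nat.Prime 7352 := cnt_step 7351 (by norm_num) (by norm_num) cnt936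
theorem cnt938 : 938 ≤ Nat.count Nat.Prime 7370 := cnt_step 7369 (by norm_num) (by norm_num) cnt937
theorem cnt939 : 939 ≤ Nat.count Nat.Prime 7394 := cnt_step 7393 (by norm_num) (by norm_num) cnt938
theorem cnt940 : 940 ≤ Nat.count Nat.Prime 7412 := cnt_step 7411 (by norm_num) (by norm_num) cnt939
theorem cnt941 : 941 ≤ Nat.count Nat.Prime 7418 := cnt_step 7417 (by norm_num) (by norm_num) cnt940
theorem cnt942 : 942 ≤ Nat.count Nat.Prime 7434 := cnt_step 7433 (by norm_num) (by norm_num) cnt941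
theorem cnt943 : 943 ≤ Nat.count Nat.Prime 7452 := cnt_step 7451 (by norm_num) (by norm_num) cnt942
theorem cnt944 : 944 ≤ Nat.count Nat.Prime 7458 := cnt_step 7457 (by norm_num) (by norm_num) cnt943
theorem cnt945 : 945 ≤ Nat.count Nat.Prime 7460 := cnt_step 7459 (by norm_num) (by norm_num) cnt944
theorem cnt946 : 946 ≤ Nat.count Nat.Prime 7478 := cnt_step 7477 (by norm_num) (by norm_num) cnt945
theorem cnt947 : 947 ≤ Nat.count Nat.Prime 7482 := cnt_step 7481 (by norm_num) (by norm_num) cnt946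
theorem cnt948 : 948 ≤ Nat.count Nat.Prime 7488 := cnt_step 7487 (by norm_num) (by norm_num) cnt947
theorem cnt949 : 949 ≤ Nat.count Nat.Prime 7490 := cnt_step 7489 (by norm_num) (by norm_num) cnt948
theorem cnt950 : 950 ≤ Nat.count Nat.Prime 7500 := cnt_step 7499 (by norm_num) (by norm_num) cnt949
theorem cnt951 : 951 ≤ Nat.count Nat.Prime 7508 := cnt_step 7507 (by norm_num) (by norm_num) cnt950
theorem cnt952 : 952 ≤ Nat.count Nat.Prime 7518 := cnt_step 7517 (by norm_num) (by norm_num) cnt951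
theorem cnt953 : 953 ≤ Nat.count Nat.Prime 7524 := cnt_step 7523 (by norm_num) (by norm_num) cnt952
theorem cnt954 : 954 ≤ Nat.count Nat.Prime 7530 := cnt_step 7529 (by norm_num) (by norm_num) cnt953
theorem cnt955 : 955 ≤ Nat.count Nat.Prime 7538 := cnt_step 7537 (by norm_num) (by norm_num) cnt954
theorem cnt956 : 956 ≤ Nat.count Nat.Prime 7542 := cnt_step 7541 (by norm_num) (by norm_num) cnt955
theorem cnt957 : 957 ≤ Nat.count Nat.Prime 7548 := cnt_step 7547 (by norm_num) (by norm_num) cnt956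
theorem cnt958 : 958 ≤ Nat.count Nat.Prime 7550 := cnt_step 7549 (by norm_num) (by norm_num) cnt957
theorem cnt959 : 959 ≤ Nat.count Nat.Prime 7560 := cnt_step 7559 (by norm_num) (by norm_num) cnt958
theorem cnt960 : 960 ≤ Nat.count Nat.Prime 7562 := cnt_step 7561 (by norm_num) (by norm_num) cnt959
theorem cnt961 : 961 ≤ Nat.count Nat.Prime 7574 := cnt_step 7573 (by norm_num) (by norm_num) cnt960
theorem cnt962 : 962 ≤ Nat.count Nat.Prime 7578 := cnt_step 7577 (by norm_num) (by norm_num) cnt961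
theorem cnt963 : 963 ≤ Nat.count Nat.Prime 7584 := cnt_step 7583 (by norm_num) (by norm_num) cnt962
theorem cnt964 : 964 ≤ Nat.count Nat.Prime 7590 := cnt_step 7589 (by norm_num) (by norm_num) cnt963
theorem cnt965 : 965 ≤ Nat.count Nat.Prime 7592 := cnt_step 7591 (by norm_num) (by norm_num) cnt964
theorem cnt966 : 966 ≤ Nat.count Nat.Prime 7604 := cnt_step 7603 (by norm_num) (by norm_num) cnt965
theorem cnt967 : 967 ≤ Nat.count Nat.Prime 7608 := cnt_step 7607 (by norm_num) (by norm_num) cnt966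
theorem cnt968 : 968 ≤ Nat.count Nat.Prime 7622 := cnt_step 7621 (by norm_num) (by norm_num) cnt967
theorem cnt969 : 969 ≤ Nat.count Nat.Prime 7640 := cnt_step 7639 (by norm_num) (by norm_num) cnt968
theorem cnt970 : 970 ≤ Nat.count Nat.Prime 7644 := cnt_step 7643 (by norm_num) (by norm_num) cnt969
theorem cnt971 : 971 ≤ Nat.count Nat.Prime 7650 := cnt_step 7649 (by norm_num) (by norm_num) cnt970
theorem cnt972 : 972 ≤ Nat.count Nat.Prime 7670 := cnt_step 7669 (by norm_num) (by norm_num) cnt971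
theorem cnt973 : 973 ≤ Nat.count Nat.Prime 7674 := cnt_step 7673 (by norm_num) (by norm_num) cnt972
theorem cnt974 : 974 ≤ Nat.count Nat.Prime 7682 := cnt_step 7681 (by norm_num) (by norm_num) cnt973
theorem cnt975 : 975 ≤ Nat.count Nat.Prime 7688 := cnt_step 7687 (by norm_num) (by norm_num) cnt974
theorem cnt976 : 976 ≤ Nat.count Nat.Prime 7692 := cnt_step 7691 (by norm_num) (by norm_num) cnt975
theorem cnt977 : 977 ≤ Nat.count Nat.Prime 7700 := cnt_step 7699 (by norm_num) (by norm_num) cnt976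
theorem cnt978 : 978 ≤ Nat.count Nat.Prime 7704 := cnt_step 7703 (by norm_num) (by norm_num) cnt977
theorem cnt979 : 979 ≤ Nat.count Nat.Prime 7718 := cnt_step 7717 (by norm_num) (by norm_num) cnt978
theorem cnt980 : 980 ≤ Nat.count Nat.Prime 7724 := cnt_step 7723 (by norm_num) (by norm_num) cnt979
theorem cnt981 : 981 ≤ Nat.count Nat.Prime 7728 := cnt_step 7727 (by norm_num) (by norm_num) cnt980
theorem cnt982 : 982 ≤ Nat.count Nat.Prime 7742 := cnt_step 7741 (by norm_num) (by norm_num) cnt981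
theorem cnt983 : 983 ≤ Nat.count Nat.Prime 7754 := cnt_step 7753 (by norm_num) (by norm_num) cnt982
theorem cnt984 : 984 ≤ Nat.count Nat.Prime 7758 := cnt_step 7757 (by norm_num) (by norm_num) cnt983
theorem cnt985 : 985 ≤ Nat.count Nat.Prime 7760 := cnt_step 7759 (by norm_num) (by norm_num) cnt984
theorem cnt986 : 986 ≤ Nat.count Nat.Prime 7790 := cnt_step 7789 (by norm_num) (by norm_num) cnt985
theorem cnt987 : 987 ≤ Nat.count Nat.Prime 7794 := cnt_step 7793 (by norm_num) (by norm_num) cnt986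
theorem cnt988 : 988 ≤ Nat.count Nat.Prime 7818 := cnt_step 7817 (by norm_num) (by norm_num) cnt987
theorem cnt989 : 989 ≤ Nat.count Nat.Prime 7824 := cnt_step 7823 (by norm_num) (by norm_num) cnt988
theorem cnt990 : 990 ≤ Nat.count Nat.Prime 7830 := cnt_step 7829 (by norm_num) (by norm_num) cnt989
theorem cnt991 : 991 ≤ Nat.count Nat.Prime 7842 := cnt_step 7841 (by norm_num) (by norm_num) cnt990
theorem cnt992 : 992 ≤ Nat.count Nat.Prime 7854 := cnt_step 7853 (by norm_num) (by norm_num) cnt991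
theorem cnt993 : 993 ≤ Nat.count Nat.Prime 7868 := cnt_step 7867 (by norm_num) (by norm_num) cnt992
theorem cnt994 : 994 ≤ Nat.count Nat.Prime 7874 := cnt_step 7873 (by norm_num) (by norm_num) cnt993
theorem cnt995 : 995 ≤ Nat.count Nat.Prime 7878 := cnt_step 7877 (by norm_num) (by norm_num) cnt994
theorem cnt996 : 996 ≤ Nat.count Nat.Prime 7880 := cnt_step 7879 (by norm_num) (by norm_num) cnt995
theorem cnt997 : 997 ≤ Nat.count Nat.Prime 7884 := cnt_step 7883 (by norm_num) (by norm_num) cnt996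
theorem cnt998 : 998 ≤ Nat.count Nat.Prime 7902 := cnt_step 7901 (by norm_num) (by norm_num) cnt997
theorem cnt999 : 999 ≤ Nat.count Nat.Prime 7908 := cnt_step 7907 (by norm_num) (by norm_num) cnt998
theorem cnt1000 : 1000 ≤ Nat.count Nat.Prime 7920 := cnt_step 7919 (by norm_num) (by norm_num) cnt999
theorem cnt1001 : 1001 ≤ Nat.count Nat.Prime 7928 := cnt_step 7927 (by norm_num) (by norm_num) cnt1000
theorem cnt1002 : 1002 ≤ Nat.count Nat.Prime 7934 := cnt_step 7933 (by norm_num) (by norm_num) cnt1001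
theorem cnt1003 : 1003 ≤ Nat.count Nat.Prime 7938 := cnt_step 7937 (by norm_num) (by norm_num) cnt1002
theorem cnt1004 : 1004 ≤ Nat.count Nat.Prime 7950 := cnt_step 7949 (by norm_num) (by norm_num) cnt1003
theorem cnt1005 : 1005 ≤ Nat.count Nat.Prime 7952 := cnt_step 7951 (by norm_num) (by norm_num) cnt1004
theorem cnt1006 : 1006 ≤ Nat.count Nat.Prime 7964 := cnt_step 7963 (by norm_num) (by norm_num) cnt1005
theorem cnt1007 : 1007 ≤ Nat.count Nat.Prime 7994 := cnt_step 7993 (by norm_num) (by norm_num) cnt1006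
theorem cnt1008 : 1008 ≤ Nat.count Nat.Prime 8010 := cnt_step 8009 (by norm_num) (by norm_num) cnt1007
theorem cnt1009 : 1009 ≤ Nat.count Nat.Prime 8012 := cnt_step 8011 (by norm_num) (by norm_num) cnt1008
theorem cnt1010 : 1010 ≤ Nat.count Nat.Prime 8018 := cnt_step 8017 (by norm_num) (by norm_num) cnt1009
theorem cnt1011 : 1011 ≤ Nat.count Nat.Prime 8040 := cnt_step 8039 (by norm_num) (by norm_num) cnt1010
theorem cnt1012 : 1012 ≤ Nat.count Nat.Prime 8054 := cnt_step 8053 (by norm_num) (by norm_num) cnt1011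
theorem cnt1013 : 1013 ≤ Nat.count Nat.Prime 8060 := cnt_step 8059 (by norm_num) (by norm_num) cnt1012
theorem cnt1014 : 1014 ≤ Nat.count Nat.Prime 8070 := cnt_step 8069 (by norm_num) (by norm_num) cnt1013
theorem cnt1015 : 1015 ≤ Nat.count Nat.Prime 8082 := cnt_step 8081 (by norm_num) (by norm_num) cnt1014
theorem cnt1016 : 1016 ≤ Nat.count Nat.Prime 8088 := cnt_step 8087 (by norm_num) (by norm_num) cnt1015
theorem cnt1017 : 1017 ≤ Nat.count Nat.Prime 8090 := cnt_step 8089 (by norm_num) (by norm_num) cnt1016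
theorem cnt1018 : 1018 ≤ Nat.count Nat.Prime 8094 := cnt_step 8093 (by norm_num) (by norm_num) cnt1017
theorem cnt1019 : 1019 ≤ Nat.count Nat.Prime 8102 := cnt_step 8101 (by norm_num) (by norm_num) cnt1018
theorem cnt1020 : 1020 ≤ Nat.count Nat.Prime 8112 := cnt_step 8111 (by norm_num) (by norm_num) cnt1019
theorem cnt1021 : 1021 ≤ Nat.count Nat.Prime 8118 := cnt_step 8117 (by norm_num) (by norm_num) cnt1020
theorem cnt1022 : 1022 ≤ Nat.count Nat.Prime 8124 := cnt_step 8123 (by norm_num) (by norm_num) cnt1021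
theorem cnt1023 : 1023 ≤ Nat.count Nat.Prime 8148 := cnt_step 8147 (by norm_num) (by norm_num) cnt1022

lemma ckpt_aux {a b M n : ℕ} (c : ℝ) (hc0 : 0 ≤ c) (hc : (M:ℝ) ≤ 2 * (a:ℝ) * c + 2)
    (hlog : c ≤ Real.log a) (hcnt : b ≤ Nat.count Nat.Prime (M + 1))
    (ha1 : 1 ≤ a) (han : a ≤ n) (hnb : n ≤ b) :
    n ≤ Nat.count Nat.Prime (⌊2 * (n:ℝ) * Real.log n + 2⌋₊ + 1) := by
  have haR : (a:ℝ) ≤ (n:ℝ) := by exact_mod_cast han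
  have ha0 : (0:ℝ) < a := by exact_mod_cast ha1
  have hlmon : Real.log a ≤ Real.log n := Real.log_le_log ha0 haR
  have h1 : (M:ℝ) ≤ 2 * (n:ℝ) * Real.log n + 2 := by
    have h2 : 2 * (a:ℝ) * c ≤ 2 * (n:ℝ) * Real.log n := by
      apply mul_le_mul (by linarith) (hlog.trans hlmon) hc0 (by positivity)
    linarith
  have h2 : M ≤ ⌊2 * (n:ℝ) * Real.log n + 2⌋₊ := Nat.le_floor h1
  exact le_trans (hnb.trans hcnt) (Nat.count_monotone _ (by omega))

lemma log3_ge : 1.5 * Real.log 2 ≤ Real.log 3 := by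
  have h9 : Real.log 9 = 2 * Real.log 3 := by
    rw [show (9:ℝ) = 3^2 by norm_num, Real.log_pow]; push_cast; ring
  have h8 : Real.log 8 = 3 * Real.log 2 := by
    rw [show (8:ℝ) = 2^3 by norm_num, Real.log_pow]; push_cast; ring
  have := Real.log_le_log (by norm_num : (0:ℝ) < 8) (by norm_num : (8:ℝ) ≤ 9)
  linarith

lemma log6_ge : 2.5 * Real.log 2 ≤ Real.log 6 := by
  have h6 : Real.log 6 = Real.log 2 + Real.log 3 := by
    rw [show (6:ℝ) = 2 * 3 by norm_num, Real.log_mul (by norm_num) (by norm_num)]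
  have := log3_ge
  linarith

lemma log22_ge : 4 * Real.log 2 + 3/11 ≤ Real.log 22 := by
  have h22 : Real.log 22 = 4 * Real.log 2 + Real.log (11/8) := by
    rw [show (22:ℝ) = 2^4 * (11/8) by norm_num,
      Real.log_mul (by positivity) (by norm_num), Real.log_pow]
    push_cast; ring
  have h1 : Real.log (8/11) ≤ 8/11 - 1 := Real.log_le_sub_one_of_pos (by norm_num)
  have h2 : Real.log (11/8) = - Real.log (8/11) := by
    rw [← Real.log_inv]; norm_num
  linarith

lemma logpow2_ge (k : ℕ) : (k:ℝ) * Real.log 2 ≤ Real.log ((2:ℝ)^k) := by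
  rw [Real.log_pow]

lemma logpow2_mono {k a : ℕ} (h : 2^k ≤ a) : (k:ℝ) * Real.log 2 ≤ Real.log a := by
  refine (logpow2_ge k).trans ?_
  apply Real.log_le_log (by positivity)
  exact_mod_cast h


set_option maxHeartbeats 1000000 in
lemma small_bound (n : ℕ) (h1 : 1 ≤ n) (h2 : n ≤ 1023) :
    n ≤ Nat.count Nat.Prime (⌊2 * (n : ℝ) * Real.log n + 2⌋₊ + 1) := by
  rcases le_or_gt n 1 with h1 | h1
  · exact ckpt_aux (a := 1) (b := 1) (M := 2) 0 le_rfl (by norm_num) (by norm_num) cnt1 (by norm_num) (by omega) (by omega)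
  rcases le_or_gt n 2 with h2 | h2
  · exact ckpt_aux (a := 2) (b := 2) (M := 3) (1 * Real.log 2) (by linarith [Real.log_two_gt_d9]) (by push_cast; linarith [Real.log_two_gt_d9]) (by exact_mod_cast logpow2_mono (k := 1) (a := 2) (by norm_num)) cnt2 (by norm_num) (by omega) (by omega)
  rcases le_or_gt n 3 with h3 | h3
  · exact ckpt_aux (a := 3) (b := 3) (M := 5) (1.5 * Real.log 2) (by linarith [Real.log_two_gt_d9]) (by push_cast; linarith [Real.log_two_gt_d9]) (by exact_mod_cast log3_ge) cnt3 (by norm_num) (by omega) (by omega)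
  rcases le_or_gt n 5 with h5 | h5
  · exact ckpt_aux (a := 4) (b := 5) (M := 11) (2 * Real.log 2) (by linarith [Real.log_two_gt_d9]) (by push_cast; linarith [Real.log_two_gt_d9]) (by exact_mod_cast logpow2_mono (k := 2) (a := 4) (by norm_num)) cnt5 (by norm_num) (by omega) (by omega)
  rcases le_or_gt n 7 with h7 | h7
  · exact ckpt_aux (a := 6) (b := 7) (M := 17) (2.5 * Real.log 2) (by linarith [Real.log_two_gt_d9]) (by push_cast; linarith [Real.log_two_gt_d9]) (by exact_mod_cast log6_ge) cnt7 (by norm_num) (by omega) (by omega)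
  rcases le_or_gt n 10 with h10 | h10
  · exact ckpt_aux (a := 8) (b := 10) (M := 29) (3 * Real.log 2) (by linarith [Real.log_two_gt_d9]) (by push_cast; linarith [Real.log_two_gt_d9]) (by exact_mod_cast logpow2_mono (k := 3) (a := 8) (by norm_num)) cnt10 (by norm_num) (by omega) (by omega)
  rcases le_or_gt n 15 with h15 | h15
  · exact ckpt_aux (a := 11) (b := 15) (M := 47) (3 * Real.log 2) (by linarith [Real.log_two_gt_d9]) (by push_cast; linarith [Real.log_two_gt_d9]) (by exact_mod_cast logpow2_mono (k := 3) (a := 11) (by norm_num)) cnt15 (by norm_num) (by omega) (by omega)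
  rcases le_or_gt n 21 with h21 | h21
  · exact ckpt_aux (a := 16) (b := 21) (M := 73) (4 * Real.log 2) (by linarith [Real.log_two_gt_d9]) (by push_cast; linarith [Real.log_two_gt_d9]) (by exact_mod_cast logpow2_mono (k := 4) (a := 16) (by norm_num)) cnt21 (by norm_num) (by omega) (by omega)
  rcases le_or_gt n 31 with h31 | h31
  · exact ckpt_aux (a := 22) (b := 31) (M := 127) (4 * Real.log 2 + 3/11) (by linarith [Real.log_two_gt_d9]) (by push_cast; linarith [Real.log_two_gt_d9]) (by exact_mod_cast log22_ge) cnt31 (by norm_num) (by omega) (by omega)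
  rcases le_or_gt n 44 with h44 | h44
  · exact ckpt_aux (a := 32) (b := 44) (M := 193) (5 * Real.log 2) (by linarith [Real.log_two_gt_d9]) (by push_cast; linarith [Real.log_two_gt_d9]) (by exact_mod_cast logpow2_mono (k := 5) (a := 32) (by norm_num)) cnt44 (by norm_num) (by omega) (by omega)
  rcases le_or_gt n 63 with h63 | h63
  · exact ckpt_aux (a := 45) (b := 63) (M := 307) (5 * Real.log 2) (by linarith [Real.log_two_gt_d9]) (by push_cast; linarith [Real.log_two_gt_d9]) (by exact_mod_cast logpow2_mono (k := 5) (a := 45) (by norm_num)) cnt63 (by norm_num) (by omega) (by omega)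
  rcases le_or_gt n 89 with h89 | h89
  · exact ckpt_aux (a := 64) (b := 89) (M := 461) (6 * Real.log 2) (by linarith [Real.log_two_gt_d9]) (by push_cast; linarith [Real.log_two_gt_d9]) (by exact_mod_cast logpow2_mono (k := 6) (a := 64) (by norm_num)) cnt89 (by norm_num) (by omega) (by omega)
  rcases le_or_gt n 127 with h127 | h127
  · exact ckpt_aux (a := 90) (b := 127) (M := 709) (6 * Real.log 2) (by linarith [Real.log_two_gt_d9]) (by push_cast; linarith [Real.log_two_gt_d9]) (by exact_mod_cast logpow2_mono (k := 6) (a := 90) (by norm_num)) cnt127 (by norm_num) (by omega) (by omega)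
  rcases le_or_gt n 179 with h179 | h179
  · exact ckpt_aux (a := 128) (b := 179) (M := 1063) (7 * Real.log 2) (by linarith [Real.log_two_gt_d9]) (by push_cast; linarith [Real.log_two_gt_d9]) (by exact_mod_cast logpow2_mono (k := 7) (a := 128) (by norm_num)) cnt179 (by norm_num) (by omega) (by omega)
  rcases le_or_gt n 255 with h255 | h255
  · exact ckpt_aux (a := 180) (b := 255) (M := 1613) (7 * Real.log 2) (by linarith [Real.log_two_gt_d9]) (by push_cast; linarith [Real.log_two_gt_d9]) (by exact_mod_cast logpow2_mono (k := 7) (a := 180) (by norm_num)) cnt255 (by norm_num) (by omega) (by omega)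
  rcases le_or_gt n 359 with h359 | h359
  · exact ckpt_aux (a := 256) (b := 359) (M := 2417) (8 * Real.log 2) (by linarith [Real.log_two_gt_d9]) (by push_cast; linarith [Real.log_two_gt_d9]) (by exact_mod_cast logpow2_mono (k := 8) (a := 256) (by norm_num)) cnt359 (by norm_num) (by omega) (by omega)
  rcases le_or_gt n 511 with h511 | h511
  · exact ckpt_aux (a := 360) (b := 511) (M := 3659) (8 * Real.log 2) (by linarith [Real.log_two_gt_d9]) (by push_cast; linarith [Real.log_two_gt_d9]) (by exact_mod_cast logpow2_mono (k := 8) (a := 360) (by norm_num)) cnt511 (by norm_num) (by omega) (by omega)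
  rcases le_or_gt n 723 with h723 | h723
  · exact ckpt_aux (a := 512) (b := 723) (M := 5477) (9 * Real.log 2) (by linarith [Real.log_two_gt_d9]) (by push_cast; linarith [Real.log_two_gt_d9]) (by exact_mod_cast logpow2_mono (k := 9) (a := 512) (by norm_num)) cnt723 (by norm_num) (by omega) (by omega)
  rcases le_or_gt n 1023 with h1023 | h1023
  · exact ckpt_aux (a := 724) (b := 1023) (M := 8147) (9 * Real.log 2) (by linarith [Real.log_two_gt_d9]) (by push_cast; linarith [Real.log_two_gt_d9]) (by exact_mod_cast logpow2_mono (k := 9) (a := 724) (by norm_num)) cnt1023 (by norm_num) (by omega) (by omega)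
  omega

lemma keyBound (n : ℕ) (hn : 1 ≤ n) :
    n ≤ Nat.count Nat.Prime (⌊2 * (n : ℝ) * Real.log n + 2⌋₊ + 1) := by
  rcases le_or_gt n 1023 with h | h
  · exact small_bound n hn h
  · exact large_bound n (by omega)

theorem nth_prime_lcm_formula (n : ℕ) (hn : 1 ≤ n) :
    Nat.nth Nat.Prime (n - 1) =
      1 + ∑ k ∈ Finset.Icc 1 ⌊2 * (n : ℝ) * Real.log n + 2⌋₊,
        (1 - (∑ j ∈ Finset.Icc 2 k, L j / (j * L (j - 1))) / n) := by
  set N := ⌊2 * (n : ℝ) * Real.log n + 2⌋₊ with hN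
  set P := Nat.nth Nat.Prime (n - 1) with hP
  have hinf := Nat.infinite_setOf_prime
  have hPN : P ≤ N := by
    have h1 : n - 1 < Nat.count Nat.Prime (N + 1) := lt_of_lt_of_le (by omega) (keyBound n hn)
    have := (Nat.lt_nth_iff_count_lt (p := Nat.Prime) hinf).mp h1
    omega
  have hP2 : 2 ≤ P := (Nat.prime_nth_prime (n - 1)).two_le
  have hterm : ∀ k ∈ Finset.Icc 1 N,
      (1 - (∑ j ∈ Finset.Icc 2 k, L j / (j * L (j - 1))) / n) = if k < P then 1 else 0 := by
    intro k hk
    rw [innerSumEq]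
    split_ifs with hkP
    · have hcnt : Nat.count Nat.Prime (k + 1) < n := by
        by_contra hcon
        push_neg at hcon
        have h1 : n - 1 < Nat.count Nat.Prime (k + 1) := by omega
        have := (Nat.lt_nth_iff_count_lt (p := Nat.Prime) hinf).mp h1
        omega
      rw [Nat.div_eq_of_lt hcnt]
    · push_neg at hkP
      have h1 : P < k + 1 := by omega
      have hcnt : n ≤ Nat.count Nat.Prime (k + 1) := by
        have := (Nat.lt_nth_iff_count_lt (p := Nat.Prime) hinf).mpr h1
        omega
      have : 1 ≤ Nat.count Nat.Prime (k + 1) / n := (Nat.one_le_div_iff (by omega)).mpr hcnt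
      omega
  rw [Finset.sum_congr rfl hterm, Finset.sum_boole]
  push_cast
  have hfilter : Finset.filter (fun k => k < P) (Finset.Icc 1 N) = Finset.Icc 1 (P - 1) := by
    ext x
    simp only [Finset.mem_filter, Finset.mem_Icc]
    omega
  rw [hfilter, Nat.card_Icc]
  omega
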